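/- arXiv:2410.20994 — 2 statements merged into one kernel-verified Lean document; each statement's English description precedes it below -/
import Mathlib

section
/- Suppose the sequence (T_n) satisfies hypotheses (NU1)–(NU4) of the nonstationary nonuniformly expanding setup. Assume: (i) there exists N_# ≥ 1 such that sup_{k,j ≥ 1} ((T_{k,k+j-1})_* m_k)(τ_{k+j} ≥ N_#) ≤ 1/2; and (ii) there exist δ_# > 0 and positive integers p_1, …, p_M with gcd(p_1,…,p_M) = 1 such that m_k(τ_k = p_m) ≥ δ_# for all k ≥ 1 and 1 ≤ m ≤ M. Then hypothesis (NU5) holds, i.e. there exist δ_0 > 0 and n_0 ≥ 1 such that ((T_{k,k+n-1})_* m_k)(Y_{k+n}) ≥ δ_0 for every k ≥ 1 and n ≥ n_0. Moreover, if sup_{k ≥ 1} ∫ τ_k^p dm_k < ∞ for some p > 1, then condition (i) holds for all sufficiently large N_#. -/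
open MeasureTheory Set Filter
open scoped NNReal ENNReal

noncomputable section

/-- `seqComp T k n = T (k+n-1) ∘ ⋯ ∘ T (k+1) ∘ T k`, i.e. the composition `T_{k,k+n-1}`. -/
def seqComp {α : Type*} (T : ℕ → α → α) (k : ℕ) : ℕ → α → α
  | 0 => id
  | n + 1 => fun x => T (k + n) (seqComp T k n x)

/-- First return time: `τ_k(x) = inf {n ≥ 1 : T_{k,k+n-1}(x) ∈ Y_{k+n}}`. -/
def retTime {α : Type*} (T : ℕ → α → α) (Y : ℕ → Set α) (k : ℕ) (x : α) : ℕ :=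
  sInf {n | 1 ≤ n ∧ seqComp T k n x ∈ Y (k + n)}

/-- `|μ|_{LL} ≤ c`: the measure `μ` has a density `ρ` with respect to `m` whose logarithm is
`c`-Lipschitz on `Y` (equivalently, `ρ y ≤ ρ y' · exp (c · d(y,y'))` for all `y, y' ∈ Y`, which
also correctly encodes the conventions `log 0 = -∞` and `log 0 - log 0 = 0`). -/
def LLBoundedBy {X : Type*} [MetricSpace X] [MeasurableSpace X]
    (m : Measure X) (Y : Set X) (μ : Measure X) (c : ℝ) : Prop :=
  ∃ ρ : X → ℝ, (∀ x, 0 ≤ ρ x) ∧ Measurable ρ ∧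
    μ = m.withDensity (fun x => ENNReal.ofReal (ρ x)) ∧
    ∀ y ∈ Y, ∀ y' ∈ Y, ρ y ≤ ρ y' * Real.exp (c * dist y y')

/-- Nonstationary nonuniformly expanding setup: hypotheses (NU1)–(NU4).
All data is indexed by `k ≥ 1`; the values at `k = 0` are irrelevant. -/
structure NUE (X : Type*) [MetricSpace X] [MeasurableSpace X] [BorelSpace X] where
  /-- the expansion constant `λ > 1` -/
  lam : ℝ
  /-- the distortion constant `K > 0` -/
  K : ℝ
  hlam : 1 < lam
  hK : 0 < K
  /-- `X` is a bounded metric space -/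
  bounded : Bornology.IsBounded (univ : Set X)
  /-- the reference sets `Y k` -/
  Y : ℕ → Set X
  Ymeas : ∀ k, MeasurableSet (Y k)
  /-- the reference probability measures `m k`, with `m k (Y k) = 1` -/
  m : ℕ → Measure X
  mprob : ∀ k, IsProbabilityMeasure (m k)
  mY : ∀ k, 1 ≤ k → m k (Y k) = 1
  /-- the maps `T k` -/
  T : ℕ → X → X
  Tmeas : ∀ k, Measurable (T k)
  /-- the partitions `P k` of `X` -/
  P : ℕ → Set (Set X)
  Pcount : ∀ k, (P k).Countable
  Pmeas : ∀ k, ∀ a ∈ P k, MeasurableSet a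
  Pdisj : ∀ k, (P k).PairwiseDisjoint id
  Pcover : ∀ k, 1 ≤ k → ⋃₀ P k = univ
  /-- `Y k` is `P k`-measurable -/
  PY : ∀ k, 1 ≤ k → ∃ S ⊆ P k, Y k = ⋃₀ S
  /-- the return times take values in `{1, 2, …}` (finite returns) -/
  retFin : ∀ k, 1 ≤ k → ∀ x : X, 1 ≤ retTime T Y k x ∧
    seqComp T k (retTime T Y k x) x ∈ Y (k + retTime T Y k x)
  /-- (NU1) -/
  nu1 : ∀ k, 1 ≤ k → ∀ a ∈ P k, a ⊆ Y k → 0 < m k a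
  /-- (NU2) τ_k is constant on partition elements -/
  nu2 : ∀ k, 1 ≤ k → ∀ a ∈ P k, ∀ x ∈ a, ∀ x' ∈ a, retTime T Y k x = retTime T Y k x'
  /-- (NU3) the first return maps are expanding bijections with log-Lipschitz Jacobians -/
  nu3 : ∀ k, 1 ≤ k → ∀ a ∈ P k, a ⊆ Y k → ∀ n, (∀ x ∈ a, retTime T Y k x = n) →
    Set.BijOn (seqComp T k n) a (Y (k + n)) ∧
    (∀ y ∈ a, ∀ y' ∈ a, lam * dist y y' ≤ dist (seqComp T k n y) (seqComp T k n y')) ∧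
    LLBoundedBy (m (k + n)) (Y (k + n)) (Measure.map (seqComp T k n) ((m k).restrict a)) K
  /-- (NU4) bounded backward expansion -/
  nu4 : ∀ k, 1 ≤ k → ∀ a ∈ P k, ∀ n, (∀ x ∈ a, retTime T Y k x = n) →
    ∀ x ∈ a, ∀ x' ∈ a, ∀ j ≤ n,
      dist (seqComp T k j x) (seqComp T k j x') ≤
        K * dist (seqComp T k n x) (seqComp T k n x')

namespace NUE

variable {X : Type*} [MetricSpace X] [MeasurableSpace X] [BorelSpace X]

/-- the return time `τ_k` -/
def tau (S : NUE X) : ℕ → X → ℕ := retTime S.T S.Y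

/-- (NU5): `((T_{k,k+n-1})_* m_k)(Y_{k+n}) ≥ δ₀` for all `k ≥ 1` and `n ≥ n₀`. -/
def nu5 (S : NUE X) (δ₀ : ℝ) (n₀ : ℕ) : Prop :=
  ∀ k, 1 ≤ k → ∀ n, n₀ ≤ n →
    ENNReal.ofReal δ₀ ≤ Measure.map (seqComp S.T k n) (S.m k) (S.Y (k + n))

/-- `μ` is regular with respect to `T_k, T_{k+1}, …` (with constant `K₁`). -/
def Regular (S : NUE X) (K₁ : ℝ) (k : ℕ) (μ : Measure X) : Prop :=
  ∀ l, 1 ≤ l →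
    LLBoundedBy (S.m (k + l)) (S.Y (k + l))
      (Measure.map (seqComp S.T k l) (μ.restrict {x | S.tau k x = l})) K₁

/-- `μ` has tail bound `r` with respect to `T_k, T_{k+1}, …`. -/
def TailBound (S : NUE X) (k : ℕ) (μ : Measure X) (r : ℕ → ℝ) : Prop :=
  ∀ n : ℕ, μ {x | n ≤ S.tau k x} ≤ ENNReal.ofReal (r n)

/-- the tail function `h^k(n) = m_k(τ_k ≥ n)`. -/
def hTail (S : NUE X) (k n : ℕ) : ℝ := (S.m k {x | n ≤ S.tau k x}).toReal

/-- `h_n^k(ℓ) = C_h (h^k(n+ℓ) + h^{k+1}(n+ℓ-1) + ⋯ + h^{k+n}(ℓ))`. -/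
def hnk (S : NUE X) (Ch : ℝ) (k n l : ℕ) : ℝ :=
  Ch * ∑ i ∈ Finset.range (n + 1), S.hTail (k + i) (n + l - i)

end NUE

/-- Condition (i) of Proposition 2.1 with threshold `N#`. -/
def NUE.condI {X : Type*} [MetricSpace X] [MeasurableSpace X] [BorelSpace X]
    (S : NUE X) (Nsharp : ℕ) : Prop :=
  ∀ k j : ℕ, 1 ≤ k → 1 ≤ j →
    Measure.map (seqComp S.T k j) (S.m k) {x | Nsharp ≤ S.tau (k + j) x} ≤ 1 / 2
section Aux
variable {α : Type*}

theorem seqComp_add' (T : ℕ → α → α) (k n m : ℕ) (x : α) :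
    seqComp T k (n + m) x = seqComp T (k + n) m (seqComp T k n x) := by
  induction m with
  | zero => rfl
  | succ m ih =>
    show T (k + (n + m)) (seqComp T k (n+m) x) = T (k + n + m) (seqComp T (k+n) m (seqComp T k n x))
    rw [← ih, add_assoc]

theorem measurable_seqComp {α : Type*} [MeasurableSpace α] {T : ℕ → α → α}
    (hT : ∀ k, Measurable (T k)) (k n : ℕ) : Measurable (seqComp T k n) := by
  induction n with
  | zero => exact measurable_id
  | succ n ih => exact (hT (k + n)).comp ih

theorem retTime_le (T : ℕ → α → α) (Y : ℕ → Set α) (k : ℕ) (x : α) {n : ℕ}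
    (h1 : 1 ≤ n) (h2 : seqComp T k n x ∈ Y (k + n)) : retTime T Y k x ≤ n :=
  Nat.sInf_le ⟨h1, h2⟩

end Aux

namespace NUE
variable {X : Type*} [MetricSpace X] [MeasurableSpace X] [BorelSpace X] (S : NUE X)

theorem tau_pos {k : ℕ} (hk : 1 ≤ k) (x : X) : 1 ≤ S.tau k x := (S.retFin k hk x).1

theorem tau_spec {k : ℕ} (hk : 1 ≤ k) (x : X) :
    seqComp S.T k (S.tau k x) x ∈ S.Y (k + S.tau k x) := (S.retFin k hk x).2

theorem tau_le {k : ℕ} (x : X) {n : ℕ} (h1 : 1 ≤ n)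
    (h2 : seqComp S.T k n x ∈ S.Y (k + n)) : S.tau k x ≤ n := retTime_le _ _ _ _ h1 h2

theorem le_tau_iff {k : ℕ} (hk : 1 ≤ k) (x : X) (n : ℕ) :
    n ≤ S.tau k x ↔ ∀ i, 1 ≤ i → i < n → seqComp S.T k i x ∉ S.Y (k + i) := by
  constructor
  · intro h i h1 h2 hmem
    exact absurd (S.tau_le x h1 hmem) (by omega)
  · intro h
    by_contra hlt
    push_neg at hlt
    exact h _ (S.tau_pos hk x) hlt (S.tau_spec hk x)

theorem measurable_le_tau {k : ℕ} (hk : 1 ≤ k) (n : ℕ) :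
    MeasurableSet {x | n ≤ S.tau k x} := by
  have : {x | n ≤ S.tau k x} =
      ⋂ i ∈ Finset.Ico 1 n, (seqComp S.T k i) ⁻¹' (S.Y (k + i))ᶜ := by
    ext x
    simp only [mem_setOf_eq, mem_iInter, Finset.mem_Ico, mem_preimage, mem_compl_iff,
      S.le_tau_iff hk]
    constructor
    · intro h i hi; exact h i hi.1 hi.2
    · intro h i h1 h2; exact h i ⟨h1, h2⟩
  rw [this]
  exact MeasurableSet.biInter (Set.to_countable _)
    (fun i _ => (measurable_seqComp S.Tmeas k i) (S.Ymeas (k + i)).compl)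

theorem measurable_tau_eq {k : ℕ} (hk : 1 ≤ k) (n : ℕ) :
    MeasurableSet {x | S.tau k x = n} := by
  have : {x | S.tau k x = n} = {x | n ≤ S.tau k x} \ {x | n + 1 ≤ S.tau k x} := by
    ext x; simp only [mem_setOf_eq, mem_diff]; omega
  rw [this]
  exact (S.measurable_le_tau hk n).diff (S.measurable_le_tau hk (n+1))

/-- hit set: points whose orbit is in `Y (k+s)` at time `s` -/
def hit (k s : ℕ) : Set X := (seqComp S.T k s) ⁻¹' (S.Y (k + s))

theorem measurable_hit (k s : ℕ) : MeasurableSet (S.hit k s) :=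
  (measurable_seqComp S.Tmeas k s) (S.Ymeas (k + s))

theorem hit_zero (k : ℕ) : S.hit k 0 = S.Y k := by
  simp [hit, seqComp]

theorem tau_le_of_hit {k s : ℕ} (h1 : 1 ≤ s) {x : X} (hx : x ∈ S.hit k s) :
    S.tau k x ≤ s := S.tau_le x h1 hx

/-- points that hit at time `tau` later: `x ∈ hit k u` and `tau (k+u) (T^u x) = p` implies
`x ∈ hit k (u+p)`. -/
theorem hit_add {k u p : ℕ} (hku : 1 ≤ k + u) {x : X}
    (hp : S.tau (k + u) (seqComp S.T k u x) = p) : x ∈ S.hit k (u + p) := by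
  have := S.tau_spec hku (seqComp S.T k u x)
  rw [hp] at this
  show seqComp S.T k (u + p) x ∈ S.Y (k + (u + p))
  rw [seqComp_add']
  rw [← add_assoc]
  exact this

end NUE
section Aux2
variable {α : Type*} [MeasurableSpace α]

theorem measurable_indicator_subtype {s : Set α} (hs : MeasurableSet s) {f : α → ℝ≥0∞}
    (hf : Measurable (fun x : s => f (x : α))) : Measurable (s.indicator f) := by
  classical
  intro B hB
  have : s.indicator f ⁻¹' B =
      (Subtype.val '' ((fun x : s => f (x : α)) ⁻¹' B)) ∪ (if (0:ℝ≥0∞) ∈ B then sᶜ else ∅) := by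
    ext x
    by_cases hx : x ∈ s
    · simp only [mem_preimage, Set.indicator_of_mem hx, mem_union, mem_image]
      constructor
      · intro h; exact Or.inl ⟨⟨x, hx⟩, h, rfl⟩
      · rintro (⟨y, hy, rfl⟩ | h)
        · exact hy
        · split_ifs at h with h0
          · exact absurd hx h
          · exact absurd h (notMem_empty x)
    · simp only [mem_preimage, Set.indicator_of_notMem hx, mem_union, mem_image]
      constructor
      · intro h0; right; simp [h0, hx]
      · rintro (⟨y, _, rfl⟩ | h)
        · exact absurd y.2 hx
        · split_ifs at h with h0
          · exact h0
          · exact absurd h (notMem_empty x)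
  rw [this]
  refine (MeasurableSet.subtype_image hs (hf hB)).union ?_
  split_ifs
  · exact hs.compl
  · exact MeasurableSet.empty

theorem Measure.map_sum' {β : Type*} [MeasurableSpace β] {ι : Type*} [Countable ι]
    {f : α → β} (hf : Measurable f) (μ : ι → MeasureTheory.Measure α) :
    (MeasureTheory.Measure.sum μ).map f = MeasureTheory.Measure.sum (fun i => (μ i).map f) := by
  ext A hA
  rw [MeasureTheory.Measure.map_apply hf hA, MeasureTheory.Measure.sum_apply _ (hf hA),
    MeasureTheory.Measure.sum_apply _ hA]
  simp_rw [MeasureTheory.Measure.map_apply hf hA]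

end Aux2

namespace NUE
variable {X : Type*} [MetricSpace X] [MeasurableSpace X] [BorelSpace X] (S : NUE X)

/-- ratio condition on a set: `ρ y ≤ ρ y' exp (c d(y,y'))`. -/
def RatioOn (ρ : X → ℝ≥0∞) (Ys : Set X) (c : ℝ) : Prop :=
  ∀ y ∈ Ys, ∀ y' ∈ Ys, ρ y ≤ ρ y' * ENNReal.ofReal (Real.exp (c * dist y y'))

theorem nonemptyX (S : NUE X) : Nonempty X := by
  rcases isEmpty_or_nonempty X with h | h
  · exfalso
    have h1 := (S.mprob 1).measure_univ
    rw [Set.univ_eq_empty_iff.mpr h, measure_empty] at h1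
    exact zero_ne_one h1
  · exact h

theorem branch_step {k : ℕ} (hk : 1 ≤ k) {a : Set X} (ha : a ∈ S.P k) (haY : a ⊆ S.Y k)
    {n : ℕ} (hn : ∀ x ∈ a, S.tau k x = n)
    {ρ₀ : X → ℝ≥0∞} (hρ₀ : Measurable ρ₀) {c : ℝ} (hc : 0 ≤ c)
    (hratio : RatioOn ρ₀ (S.Y k) c) :
    ∃ ρ₁ : X → ℝ≥0∞, Measurable ρ₁ ∧
      Measure.map (seqComp S.T k n) (((S.m k).withDensity ρ₀).restrict a)
        = (S.m (k+n)).withDensity ρ₁ ∧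
      RatioOn ρ₁ (S.Y (k+n)) (S.K + c / S.lam) := by
  classical
  have : Nonempty X := S.nonemptyX
  obtain ⟨hbij, hexp, ζ, hζ0, hζm, hζeq, hζratio⟩ := S.nu3 k hk a ha haY n hn
  set F := seqComp S.T k n with hF
  have hFm : Measurable F := measurable_seqComp S.Tmeas k n
  have hlam0 : (0:ℝ) < S.lam := lt_trans one_pos S.hlam
  have hinj : Set.InjOn F a := by
    intro x hx x' hx' hxx
    have h2 := hexp x hx x' hx'
    rw [hxx, dist_self] at h2
    have h3 : dist x x' ≤ 0 := by nlinarith [dist_nonneg (x := x) (y := x')]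
    exact dist_le_zero.mp h3
  -- inverse map
  set g : X → X := Function.invFunOn F a with hg
  have hgF : ∀ x ∈ a, g (F x) = x := fun x hx => hinj.leftInvOn_invFunOn hx
  have hgmem : ∀ y ∈ S.Y (k+n), g y ∈ a ∧ F (g y) = y := by
    intro y hy
    obtain ⟨x, hx, hxy⟩ := hbij.surjOn hy
    have h : ∃ x' ∈ a, F x' = y := ⟨x, hx, hxy⟩
    exact ⟨Function.invFunOn_mem h, Function.invFunOn_eq h⟩
  have hglip : ∀ y ∈ S.Y (k+n), ∀ y' ∈ S.Y (k+n),
      dist (g y) (g y') ≤ S.lam⁻¹ * dist y y' := by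
    intro y hy y' hy'
    have h1 := hexp (g y) (hgmem y hy).1 (g y') (hgmem y' hy').1
    rw [(hgmem y hy).2, (hgmem y' hy').2] at h1
    rw [inv_mul_eq_div, le_div_iff₀ hlam0, mul_comm]
    exact h1
  have hgcont : Measurable (fun y : S.Y (k+n) => g (y : X)) := by
    have hL : LipschitzWith (Real.toNNReal S.lam⁻¹) (fun y : S.Y (k+n) => g (y : X)) := by
      apply LipschitzWith.of_dist_le_mul
      intro y y'
      refine le_trans (hglip _ y.2 _ y'.2) (mul_le_mul_of_nonneg_right ?_ dist_nonneg)
      exact Real.le_coe_toNNReal _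
    exact hL.continuous.measurable
  -- the new density
  set Y' := S.Y (k+n) with hY'
  have hY'm : MeasurableSet Y' := S.Ymeas (k+n)
  set ψ : X → ℝ≥0∞ := Y'.indicator (fun y => ρ₀ (g y)) with hψ
  have hψm : Measurable ψ :=
    measurable_indicator_subtype hY'm (hρ₀.comp hgcont)
  set ρ₁ : X → ℝ≥0∞ := fun y => ENNReal.ofReal (ζ y) * ψ y with hρ₁
  have hρ₁m : Measurable ρ₁ := (hζm.ennreal_ofReal).mul hψm
  refine ⟨ρ₁, hρ₁m, ?_, ?_⟩
  · -- measure equality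
    have ham : MeasurableSet a := S.Pmeas k a ha
    have e1 : (S.m (k+n)).withDensity ρ₁
        = ((S.m (k+n)).withDensity (fun y => ENNReal.ofReal (ζ y))).withDensity ψ := by
      rw [← withDensity_mul _ (hζm.ennreal_ofReal) hψm]; rfl
    rw [e1, ← hζeq]
    ext A hA
    rw [Measure.map_apply hFm hA, Measure.restrict_apply (hFm hA),
      withDensity_apply _ ((hFm hA).inter ham),
      withDensity_apply _ hA, setLIntegral_map hA hψm hFm,
      Measure.restrict_restrict (hFm hA)]
    apply setLIntegral_congr_fun ((hFm hA).inter ham)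
    rintro x ⟨hxA, hxa⟩
    have hFx : F x ∈ Y' := hbij.mapsTo hxa
    beta_reduce
    rw [hψ, Set.indicator_of_mem hFx, hgF x hxa]
  · -- ratio bound
    intro y hy y' hy'
    have hgy := hgmem y hy
    have hgy' := hgmem y' hy'
    rw [hρ₁, hψ]
    simp only [Set.indicator_of_mem hy, Set.indicator_of_mem hy']
    have hz : ENNReal.ofReal (ζ y) ≤ ENNReal.ofReal (ζ y')
        * ENNReal.ofReal (Real.exp (S.K * dist y y')) := by
      rw [← ENNReal.ofReal_mul (hζ0 y')]
      exact ENNReal.ofReal_le_ofReal (hζratio y hy y' hy')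
    have hr : ρ₀ (g y) ≤ ρ₀ (g y')
        * ENNReal.ofReal (Real.exp (c / S.lam * dist y y')) := by
      refine le_trans (hratio _ (haY hgy.1) _ (haY hgy'.1)) ?_
      refine mul_le_mul_right (ENNReal.ofReal_le_ofReal (Real.exp_le_exp.mpr ?_)) _
      calc c * dist (g y) (g y') ≤ c * (S.lam⁻¹ * dist y y') :=
            mul_le_mul_of_nonneg_left (hglip y hy y' hy') hc
        _ = c / S.lam * dist y y' := by ring
    calc ENNReal.ofReal (ζ y) * ρ₀ (g y)
        ≤ (ENNReal.ofReal (ζ y') * ENNReal.ofReal (Real.exp (S.K * dist y y')))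
          * (ρ₀ (g y') * ENNReal.ofReal (Real.exp (c / S.lam * dist y y'))) :=
          mul_le_mul' hz hr
      _ = ENNReal.ofReal (ζ y') * ρ₀ (g y')
          * (ENNReal.ofReal (Real.exp (S.K * dist y y'))
            * ENNReal.ofReal (Real.exp (c / S.lam * dist y y'))) := by ring
      _ = ENNReal.ofReal (ζ y') * ρ₀ (g y')
          * ENNReal.ofReal (Real.exp ((S.K + c / S.lam) * dist y y')) := by
          rw [← ENNReal.ofReal_mul (Real.exp_nonneg _), ← Real.exp_add]
          ring_nf

end NUE
namespace NUE
variable {X : Type*} [MetricSpace X] [MeasurableSpace X] [BorelSpace X] (S : NUE X)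

/-- the composed distortion constant -/
def K1 (S : NUE X) : ℝ := S.K * S.lam / (S.lam - 1)

theorem K1_pos : 0 < S.K1 := by
  have h1 := S.hK
  have h2 := S.hlam
  exact div_pos (mul_pos h1 (by linarith)) (by linarith)

theorem K1_eq : S.K + S.K1 / S.lam = S.K1 := by
  have h2 := S.hlam
  have h3 : S.lam ≠ 0 := by linarith
  have h4 : S.lam - 1 ≠ 0 := by intro h; apply h3; linarith [sub_eq_zero.mp h]
  unfold K1
  field_simp
  ring

theorem mem_part {k : ℕ} (hk : 1 ≤ k) {x : X} (hx : x ∈ S.Y k) :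
    ∃ a, a ∈ S.P k ∧ a ⊆ S.Y k ∧ x ∈ a := by
  have hcover : x ∈ ⋃₀ S.P k := by rw [S.Pcover k hk]; trivial
  obtain ⟨a, haP, hxa⟩ := hcover
  obtain ⟨Ss, hSs, hYeq⟩ := S.PY k hk
  have hxY : x ∈ ⋃₀ Ss := by rwa [← hYeq]
  obtain ⟨b, hbS, hxb⟩ := hxY
  have hab : a = b := by
    by_contra hne
    exact (Set.disjoint_left.mp ((S.Pdisj k) haP (hSs hbS) hne) hxa) hxb
  refine ⟨a, haP, ?_, hxa⟩
  rw [hab, hYeq]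
  exact subset_sUnion_of_mem hbS

theorem density_prop : ∀ s k : ℕ, 1 ≤ s → 1 ≤ k → ∀ ρ₀ : X → ℝ≥0∞, Measurable ρ₀ →
    RatioOn ρ₀ (S.Y k) S.K1 →
    ∃ ρ : X → ℝ≥0∞, Measurable ρ ∧
      Measure.map (seqComp S.T k s) (((S.m k).withDensity ρ₀).restrict (S.Y k ∩ S.hit k s))
        = (S.m (k+s)).withDensity ρ ∧ RatioOn ρ (S.Y (k+s)) S.K1 := by
  intro s
  induction s using Nat.strong_induction_on with
  | _ s IH =>
  intro k hs hk ρ₀ hρ₀m hρ₀r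
  set μ := (S.m k).withDensity ρ₀ with hμ
  set ι := {a : Set X // a ∈ S.P k ∧ a ⊆ S.Y k} with hι
  have hcount : Countable ι := by
    have h1 : {a : Set X | a ∈ S.P k ∧ a ⊆ S.Y k}.Countable :=
      (S.Pcount k).mono (fun a ha => ha.1)
    exact h1.to_subtype
  -- decomposition of the domain
  have hdeco : S.Y k ∩ S.hit k s = ⋃ (a : ι), ((a : Set X) ∩ S.hit k s) := by
    ext x
    constructor
    · rintro ⟨hxY, hxh⟩
      obtain ⟨a, haP, haY, hxa⟩ := S.mem_part hk hxY
      exact Set.mem_iUnion.mpr ⟨⟨a, haP, haY⟩, hxa, hxh⟩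
    · intro hx
      obtain ⟨a, hxa, hxh⟩ := Set.mem_iUnion.mp hx
      exact ⟨a.2.2 hxa, hxh⟩
  have hameas : ∀ a : ι, MeasurableSet ((a : Set X) ∩ S.hit k s) :=
    fun a => (S.Pmeas k a a.2.1).inter (S.measurable_hit k s)
  have hrsum : μ.restrict (S.Y k ∩ S.hit k s)
      = Measure.sum (fun a : ι => μ.restrict ((a : Set X) ∩ S.hit k s)) := by
    rw [hdeco]
    apply Measure.restrict_iUnion _ hameas
    intro a b hne
    have hsets : (a : Set X) ≠ (b : Set X) := fun h => hne (Subtype.ext h)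
    have hd : Disjoint (a : Set X) (b : Set X) := (S.Pdisj k) a.2.1 b.2.1 hsets
    exact (hd.mono inter_subset_left inter_subset_left)
  -- per-branch densities
  have key : ∀ a : ι, ∃ ρa : X → ℝ≥0∞, Measurable ρa ∧
      Measure.map (seqComp S.T k s) (μ.restrict ((a : Set X) ∩ S.hit k s))
        = (S.m (k+s)).withDensity ρa ∧ RatioOn ρa (S.Y (k+s)) S.K1 := by
    rintro ⟨a, haP, haY⟩
    simp only
    -- the constant return time on a
    have hane : a.Nonempty := by
      rcases Set.eq_empty_or_nonempty a with h | h
      · exfalso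
        have := S.nu1 k hk a haP haY
        rw [h, measure_empty] at this
        exact lt_irrefl _ this
      · exact h
    obtain ⟨x₀, hx₀⟩ := hane
    set n := S.tau k x₀ with hn
    have hconst : ∀ x ∈ a, S.tau k x = n := fun x hx => S.nu2 k hk a haP x hx x₀ hx₀
    have hn1 : 1 ≤ n := S.tau_pos hk x₀
    obtain ⟨hbij, hexp, hLL⟩ := S.nu3 k hk a haP haY n hconst
    rcases lt_trichotomy s n with hsn | hsn | hsn
    · -- s < n : empty
      have hempty : a ∩ S.hit k s = ∅ := by
        ext x
        simp only [mem_inter_iff, mem_empty_iff_false, iff_false, not_and]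
        intro hxa hxh
        have h1 := S.tau_le_of_hit hs hxh
        rw [hconst x hxa] at h1
        omega
      refine ⟨0, measurable_const, ?_, ?_⟩
      · rw [hempty, Measure.restrict_empty, Measure.map_zero, withDensity_zero]
      · intro y _ y' _; simp
    · -- s = n : single full branch
      have hfull : a ∩ S.hit k s = a := by
        apply inter_eq_left.mpr
        intro x hx
        have hmem := hbij.mapsTo hx
        show seqComp S.T k s x ∈ S.Y (k + s)
        rw [hsn]
        exact hmem
      rw [hfull, hsn]
      obtain ⟨ρ₁, hρ₁m, hρ₁eq, hρ₁r⟩ :=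
        S.branch_step hk haP haY hconst hρ₀m (le_of_lt S.K1_pos) hρ₀r
      rw [S.K1_eq] at hρ₁r
      exact ⟨ρ₁, hρ₁m, hρ₁eq, hρ₁r⟩
    · -- n < s : compose with induction
      set F := seqComp S.T k n with hF
      have hFm : Measurable F := measurable_seqComp S.Tmeas k n
      set W := S.Y (k+n) ∩ S.hit (k+n) (s-n) with hW
      have hWm : MeasurableSet W := (S.Ymeas (k+n)).inter (S.measurable_hit (k+n) (s-n))
      have hset : a ∩ S.hit k s = F ⁻¹' W ∩ a := by
        ext x
        simp only [mem_inter_iff, mem_preimage]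
        constructor
        · rintro ⟨hxa, hxh⟩
          refine ⟨⟨hbij.mapsTo hxa, ?_⟩, hxa⟩
          show seqComp S.T (k+n) (s-n) (F x) ∈ S.Y (k+n+(s-n))
          rw [← seqComp_add']
          have h1 : n + (s - n) = s := by omega
          have h2 : k + n + (s - n) = k + s := by omega
          rw [h1, h2]
          exact hxh
        · rintro ⟨⟨_, hxh⟩, hxa⟩
          refine ⟨hxa, ?_⟩
          show seqComp S.T k s x ∈ S.Y (k + s)
          have h1 : n + (s - n) = s := by omega
          have h2 : k + n + (s - n) = k + s := by omega
          rw [← h1, seqComp_add', ← hF]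
          rw [h1, ← h2]
          exact hxh
      -- push forward one branch, then use IH
      obtain ⟨ρ₁, hρ₁m, hρ₁eq, hρ₁r⟩ :=
        S.branch_step hk haP haY hconst hρ₀m (le_of_lt S.K1_pos) hρ₀r
      rw [S.K1_eq] at hρ₁r
      have hsn1 : 1 ≤ s - n := by omega
      have hksn : 1 ≤ k + n := by omega
      obtain ⟨ρ₂, hρ₂m, hρ₂eq, hρ₂r⟩ :=
        IH (s - n) (by omega) (k + n) hsn1 hksn ρ₁ hρ₁m hρ₁r
      refine ⟨ρ₂, hρ₂m, ?_, ?_⟩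
      · have hcomp : seqComp S.T k s = (seqComp S.T (k+n) (s-n)) ∘ F := by
          funext x
          show seqComp S.T k s x = seqComp S.T (k+n) (s-n) (F x)
          have h1 : n + (s - n) = s := by omega
          rw [← h1, seqComp_add', ← hF, h1]
        rw [hset, ← Measure.restrict_restrict (hFm hWm), hcomp,
          ← Measure.map_map (measurable_seqComp S.Tmeas (k+n) (s-n)) hFm,
          ← Measure.restrict_map hFm hWm, hρ₁eq, restrict_withDensity hWm,
          ← restrict_withDensity hWm]
        have h2 : k + n + (s - n) = k + s := by omega
        rw [← h2]
        exact hρ₂eq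
      · have h2 : k + n + (s - n) = k + s := by omega
        rw [← h2]
        exact hρ₂r
  choose ρs h1 h2 h3 using key
  refine ⟨fun y => ∑' a : ι, ρs a y, Measurable.ennreal_tsum h1, ?_, ?_⟩
  have hfun : (fun y => ∑' a : ι, ρs a y) = ∑' a : ι, ρs a := by
    funext y; rw [ENNReal.tsum_apply]
  · rw [hfun, hrsum, Measure.map_sum' (measurable_seqComp S.Tmeas k s), withDensity_tsum h1]
    congr 1
    funext a
    exact h2 a
  · intro y hy y' hy'
    rw [← ENNReal.tsum_mul_right]
    exact ENNReal.tsum_le_tsum (fun a => h3 a y hy y' hy')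

end NUE
namespace NUE
variable {X : Type*} [MetricSpace X] [MeasurableSpace X] [BorelSpace X] (S : NUE X)

/-- the mass of points of `Y k` whose orbit is in `Y` at time `s` -/
def q (S : NUE X) (k s : ℕ) : ℝ≥0∞ := S.m k (S.Y k ∩ S.hit k s)

/-- the transported measure at time `s` -/
def nuM (S : NUE X) (k s : ℕ) : Measure X :=
  Measure.map (seqComp S.T k s) ((S.m k).restrict (S.Y k ∩ S.hit k s))

theorem nuM_apply (k s : ℕ) {A : Set X} (hA : MeasurableSet A) :
    S.nuM k s A = S.m k ((S.Y k ∩ S.hit k s) ∩ (seqComp S.T k s) ⁻¹' A) := by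
  rw [nuM, Measure.map_apply (measurable_seqComp S.Tmeas k s) hA,
    Measure.restrict_apply (measurable_seqComp S.Tmeas k s hA), Set.inter_comm]

theorem nuM_Y (k s : ℕ) : S.nuM k s (S.Y (k + s)) = S.q k s := by
  rw [S.nuM_apply k s (S.Ymeas (k+s))]
  congr 1
  apply inter_eq_left.mpr
  exact fun x hx => hx.2

theorem Ynonempty {k : ℕ} (hk : 1 ≤ k) : (S.Y k).Nonempty := by
  rcases Set.eq_empty_or_nonempty (S.Y k) with h | h
  · exfalso
    have h1 := S.mY k hk
    rw [h, measure_empty] at h1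
    exact zero_ne_one h1
  · exact h

theorem compare {D : ℝ} (hD : ∀ x y : X, dist x y ≤ D) {k s : ℕ} (hk : 1 ≤ k) (hs : 1 ≤ s)
    {A : Set X} (hA : MeasurableSet A) (hAY : A ⊆ S.Y (k+s)) :
    S.nuM k s A ≤ (ENNReal.ofReal (Real.exp (S.K1 * D)))^2 * S.m (k+s) A ∧
    S.m (k+s) A * S.q k s
      ≤ (ENNReal.ofReal (Real.exp (S.K1 * D)))^2 * S.nuM k s A := by
  have : Nonempty X := S.nonemptyX
  obtain ⟨x⟩ := this
  have hD0 : 0 ≤ D := le_trans dist_nonneg (hD x x)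
  set E := ENNReal.ofReal (Real.exp (S.K1 * D)) with hE
  have hK10 : 0 ≤ S.K1 := le_of_lt S.K1_pos
  have hE1 : 1 ≤ E := by
    rw [hE, ← ENNReal.ofReal_one]
    exact ENNReal.ofReal_le_ofReal (Real.one_le_exp (by positivity))
  have hE0 : E ≠ 0 := by intro h; rw [h] at hE1; exact absurd hE1 (by simp)
  have hEt : E ≠ ⊤ := ENNReal.ofReal_ne_top
  -- density representation
  have hone : RatioOn (fun _ : X => (1:ℝ≥0∞)) (S.Y k) S.K1 := by
    intro y hy y' hy'
    rw [one_mul, ← ENNReal.ofReal_one]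
    exact ENNReal.ofReal_le_ofReal (Real.one_le_exp (by positivity))
  obtain ⟨ρ, hρm, hρeq, hρr⟩ := S.density_prop s k hs hk (fun _ => 1) measurable_const hone
  have hνdef : S.nuM k s = (S.m (k+s)).withDensity ρ := by
    have h1 : ((S.m k).withDensity fun _ => (1:ℝ≥0∞)) = S.m k := by
      rw [show (fun _ : X => (1:ℝ≥0∞)) = (1 : X → ℝ≥0∞) from rfl,
        MeasureTheory.withDensity_one]
    rw [nuM, ← hρeq, h1]
  set Y' := S.Y (k+s) with hY'
  have hY'm : MeasurableSet Y' := S.Ymeas (k+s)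
  have hY'1 : S.m (k+s) Y' = 1 := S.mY (k+s) (by omega)
  obtain ⟨y₀, hy₀⟩ : Y'.Nonempty := S.Ynonempty (k := k+s) (by omega)
  have hup : ∀ y ∈ Y', ρ y ≤ ρ y₀ * E := by
    intro y hy
    refine le_trans (hρr y hy y₀ hy₀) (mul_le_mul_right ?_ _)
    exact ENNReal.ofReal_le_ofReal (Real.exp_le_exp.mpr
      (mul_le_mul_of_nonneg_left (hD y y₀) hK10))
  have hdown : ∀ y ∈ Y', ρ y₀ ≤ ρ y * E := by
    intro y hy
    refine le_trans (hρr y₀ hy₀ y hy) (mul_le_mul_right ?_ _)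
    exact ENNReal.ofReal_le_ofReal (Real.exp_le_exp.mpr
      (mul_le_mul_of_nonneg_left (hD y₀ y) hK10))
  have hνA : S.nuM k s A = ∫⁻ y in A, ρ y ∂(S.m (k+s)) := by
    rw [hνdef, withDensity_apply _ hA]
  have hνY : S.nuM k s Y' = ∫⁻ y in Y', ρ y ∂(S.m (k+s)) := by
    rw [hνdef, withDensity_apply _ hY'm]
  -- pointwise bounds integrated
  have hAup : S.nuM k s A ≤ ρ y₀ * E * S.m (k+s) A := by
    rw [hνA]
    calc ∫⁻ y in A, ρ y ∂(S.m (k+s)) ≤ ∫⁻ _ in A, (ρ y₀ * E) ∂(S.m (k+s)) :=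
          setLIntegral_mono measurable_const (fun y hy => hup y (hAY hy))
      _ = ρ y₀ * E * S.m (k+s) A := setLIntegral_const _ _
  have hAlow : ρ y₀ / E * S.m (k+s) A ≤ S.nuM k s A := by
    rw [hνA]
    calc ρ y₀ / E * S.m (k+s) A = ∫⁻ _ in A, (ρ y₀ / E) ∂(S.m (k+s)) :=
          (setLIntegral_const _ _).symm
      _ ≤ ∫⁻ y in A, ρ y ∂(S.m (k+s)) :=
          setLIntegral_mono hρm (fun y hy => ENNReal.div_le_of_le_mul (hdown y (hAY hy)))
  have hYup : S.nuM k s Y' ≤ ρ y₀ * E := by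
    rw [hνY]
    calc ∫⁻ y in Y', ρ y ∂(S.m (k+s)) ≤ ∫⁻ _ in Y', (ρ y₀ * E) ∂(S.m (k+s)) :=
          setLIntegral_mono measurable_const (fun y hy => hup y hy)
      _ = ρ y₀ * E * S.m (k+s) Y' := setLIntegral_const _ _
      _ = ρ y₀ * E := by rw [hY'1, mul_one]
  have hYlow : ρ y₀ / E ≤ S.nuM k s Y' := by
    rw [hνY]
    calc ρ y₀ / E = ρ y₀ / E * S.m (k+s) Y' := by rw [hY'1, mul_one]
      _ = ∫⁻ _ in Y', (ρ y₀ / E) ∂(S.m (k+s)) := (setLIntegral_const _ _).symm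
      _ ≤ ∫⁻ y in Y', ρ y ∂(S.m (k+s)) :=
          setLIntegral_mono hρm (fun y hy => ENNReal.div_le_of_le_mul (hdown y hy))
  have hν1 : S.nuM k s Y' ≤ 1 := by
    refine le_trans (measure_mono (subset_univ _)) ?_
    rw [nuM, Measure.map_apply (measurable_seqComp S.Tmeas k s) MeasurableSet.univ,
      Set.preimage_univ, Measure.restrict_apply MeasurableSet.univ, Set.univ_inter]
    haveI := S.mprob k
    exact prob_le_one
  constructor
  · -- upper bound
    have hρy₀ : ρ y₀ ≤ E := by
      have h1 : ρ y₀ / E ≤ 1 := le_trans hYlow hν1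
      calc ρ y₀ = ρ y₀ / E * E := (ENNReal.div_mul_cancel hE0 hEt).symm
        _ ≤ 1 * E := mul_le_mul_left h1 _
        _ = E := one_mul _
    calc S.nuM k s A ≤ ρ y₀ * E * S.m (k+s) A := hAup
      _ ≤ E * E * S.m (k+s) A := by
          exact mul_le_mul_left (mul_le_mul_left hρy₀ _) _
      _ = E^2 * S.m (k+s) A := by rw [sq]
  · -- lower bound
    rw [← S.nuM_Y k s]
    calc S.m (k+s) A * S.nuM k s Y' ≤ S.m (k+s) A * (ρ y₀ * E) :=
          mul_le_mul_right hYup _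
      _ = E^2 * (ρ y₀ / E * S.m (k+s) A) := by
          rw [sq, mul_assoc, ← mul_assoc E (ρ y₀ / E) _, ENNReal.mul_div_cancel hE0 hEt]
          ring
      _ ≤ E^2 * S.nuM k s A := mul_le_mul_right hAlow _

end NUE
namespace NUE
variable {X : Type*} [MetricSpace X] [MeasurableSpace X] [BorelSpace X] (S : NUE X)

theorem measure_inter_Y {k : ℕ} (hk : 1 ≤ k) {B : Set X} :
    S.m k (B ∩ S.Y k) = S.m k B := by
  haveI := S.mprob k
  have hYc : S.m k (S.Y k)ᶜ = 0 := by
    rw [measure_compl (S.Ymeas k) (measure_ne_top _ _), S.mY k hk, measure_univ]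
    simp
  refine le_antisymm (measure_mono inter_subset_left) ?_
  calc S.m k B ≤ S.m k (B ∩ S.Y k) + S.m k (B \ S.Y k) := measure_le_inter_add_diff _ _ _
    _ ≤ S.m k (B ∩ S.Y k) + S.m k (S.Y k)ᶜ := by
        exact add_le_add_right (measure_mono (fun x hx => hx.2)) _
    _ = S.m k (B ∩ S.Y k) := by rw [hYc, add_zero]

section Chain

variable {D δs : ℝ} {M : ℕ} {p : Fin M → ℕ}

theorem chain_step (hD : ∀ x y : X, dist x y ≤ D)
    (hδ : ∀ k, 1 ≤ k → ∀ i : Fin M, ENNReal.ofReal δs ≤ S.m k {x | S.tau k x = p i})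
    {k u : ℕ} (hk : 1 ≤ k) (hu : 1 ≤ u) (i : Fin M) :
    ENNReal.ofReal δs * S.q k u
      ≤ (ENNReal.ofReal (Real.exp (S.K1 * D)))^2 * S.q k (u + p i) := by
  have hku : 1 ≤ k + u := by omega
  set A := {y | S.tau (k+u) y = p i} ∩ S.Y (k+u) with hA
  have hAm : MeasurableSet A := (S.measurable_tau_eq hku (p i)).inter (S.Ymeas (k+u))
  have hAY : A ⊆ S.Y (k+u) := inter_subset_right
  have hcomp := (S.compare hD hk hu hAm hAY).2
  have hmA : ENNReal.ofReal δs ≤ S.m (k+u) A := by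
    rw [hA, S.measure_inter_Y hku]
    exact hδ (k+u) hku i
  have hnu : S.nuM k u A ≤ S.q k (u + p i) := by
    rw [S.nuM_apply k u hAm]
    apply measure_mono
    rintro x ⟨⟨hxY, hxh⟩, hxA⟩
    exact ⟨hxY, S.hit_add hku hxA.1⟩
  calc ENNReal.ofReal δs * S.q k u ≤ S.m (k+u) A * S.q k u := mul_le_mul_left hmA _
    _ ≤ (ENNReal.ofReal (Real.exp (S.K1 * D)))^2 * S.nuM k u A := hcomp
    _ ≤ _ := mul_le_mul_right hnu _

theorem chain (hD : ∀ x y : X, dist x y ≤ D)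
    (hδ : ∀ k, 1 ≤ k → ∀ i : Fin M, ENNReal.ofReal δs ≤ S.m k {x | S.tau k x = p i})
    {k : ℕ} (hk : 1 ≤ k) :
    ∀ (l : List (Fin M)) (u : ℕ), 1 ≤ u →
      (ENNReal.ofReal δs)^l.length * S.q k u
        ≤ ((ENNReal.ofReal (Real.exp (S.K1 * D)))^2)^l.length
            * S.q k (u + (l.map p).sum) := by
  intro l
  induction l with
  | nil => intro u hu; simp
  | cons i l ih =>
    intro u hu
    set E2 := (ENNReal.ofReal (Real.exp (S.K1 * D)))^2 with hE2
    have h1 : ENNReal.ofReal δs * S.q k u ≤ E2 * S.q k (u + p i) :=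
      S.chain_step hD hδ hk hu i
    have h2 := ih (u + p i) (by omega)
    calc (ENNReal.ofReal δs)^(i :: l).length * S.q k u
        = (ENNReal.ofReal δs)^l.length * (ENNReal.ofReal δs * S.q k u) := by
          rw [List.length_cons, pow_succ]; ring
      _ ≤ (ENNReal.ofReal δs)^l.length * (E2 * S.q k (u + p i)) :=
          mul_le_mul_right h1 _
      _ = E2 * ((ENNReal.ofReal δs)^l.length * S.q k (u + p i)) := by ring
      _ ≤ E2 * (E2^l.length * S.q k (u + p i + (l.map p).sum)) :=
          mul_le_mul_right h2 _
      _ = E2^(i :: l).length * S.q k (u + ((i :: l).map p).sum) := by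
          rw [List.length_cons, pow_succ, List.map_cons, List.sum_cons]
          have : u + p i + (l.map p).sum = u + (p i + (l.map p).sum) := by omega
          rw [this]
          ring

end Chain
end NUE
section Rep

theorem bezout_finset {M : ℕ} (p : Fin M → ℕ) (s : Finset (Fin M)) :
    ∃ z : Fin M → ℤ, ∑ i ∈ s, z i * p i = ((s.gcd p : ℕ) : ℤ) := by
  classical
  induction s using Finset.induction_on with
  | empty => exact ⟨0, by simp⟩
  | insert a s ha ih =>
    obtain ⟨z, hz⟩ := ih
    set g : ℕ := s.gcd p with hg
    set A : ℤ := Nat.gcdA (p a) g with hA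
    set B : ℤ := Nat.gcdB (p a) g with hB
    set zz : Fin M → ℤ := fun i => if i = a then A else B * z i with hzz
    refine ⟨zz, ?_⟩
    rw [Finset.sum_insert ha]
    have ha' : zz a = A := if_pos rfl
    have h1 : ∑ i ∈ s, zz i * p i = B * ∑ i ∈ s, z i * p i := by
      rw [Finset.mul_sum]
      apply Finset.sum_congr rfl
      intro i hi
      rw [show zz i = B * z i from if_neg (ne_of_mem_of_not_mem hi ha)]
      ring
    rw [ha', h1, hz, Finset.gcd_insert]
    have h2 := Nat.gcd_eq_gcd_ab (p a) g
    have h3 : (GCDMonoid.gcd (p a) (s.gcd p) : ℕ) = Nat.gcd (p a) g := by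
      rw [hg]; rfl
    show (A * p a) + B * g = ((GCDMonoid.gcd (p a) (s.gcd p) : ℕ) : ℤ)
    rw [h3, h2]
    ring

theorem exists_list_sum {M : ℕ} (p : Fin M → ℕ) (c : Fin M → ℕ) :
    ∃ l : List (Fin M), (l.map p).sum = ∑ i, c i * p i := by
  classical
  suffices h : ∀ s : Finset (Fin M), ∃ l : List (Fin M), (l.map p).sum = ∑ i ∈ s, c i * p i by
    exact h Finset.univ
  intro s
  induction s using Finset.induction_on with
  | empty => exact ⟨[], by simp⟩
  | insert a s ha ih =>
    obtain ⟨l, hl⟩ := ih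
    refine ⟨List.replicate (c a) a ++ l, ?_⟩
    rw [Finset.sum_insert ha, List.map_append, List.sum_append, hl, List.map_replicate,
      List.sum_replicate, smul_eq_mul]

theorem rep_lemma {M : ℕ} (p : Fin M → ℕ) (hp : ∀ i, 0 < p i)
    (hg : Finset.univ.gcd p = 1) :
    ∃ n₁ : ℕ, 1 ≤ n₁ ∧ ∀ n, n₁ ≤ n → ∃ l : List (Fin M), (l.map p).sum = n := by
  obtain ⟨z, hz⟩ := bezout_finset p Finset.univ
  rw [hg] at hz
  push_cast at hz
  set Sb : ℕ := ∑ i, (z i).natAbs * p i with hSb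
  have hSbZ : (Sb : ℤ) = ∑ i, |z i| * (p i : ℤ) := by
    rw [hSb]
    push_cast
    rfl
  have hSb1 : 1 ≤ Sb := by
    have h1 : (1:ℤ) ≤ (Sb:ℤ) := by
      calc (1:ℤ) = |∑ i, z i * (p i : ℤ)| := by rw [hz]; norm_num
        _ ≤ ∑ i, |z i * (p i : ℤ)| := Finset.abs_sum_le_sum_abs _ _
        _ = (Sb:ℤ) := by
            rw [hSbZ]
            apply Finset.sum_congr rfl
            intro i _
            rw [abs_mul, abs_of_nonneg (show (0:ℤ) ≤ (p i : ℤ) from Int.ofNat_nonneg _)]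
    exact_mod_cast h1
  refine ⟨Sb * Sb + Sb, by nlinarith, ?_⟩
  intro n hn
  have hSb0 : 0 < Sb := hSb1
  set qq := n / Sb with hqq
  set r := n % Sb with hr
  have hdiv : n = qq * Sb + r := by
    rw [hqq, hr, mul_comm]
    exact (Nat.div_add_mod n Sb).symm
  have hrlt : r < Sb := Nat.mod_lt _ hSb0
  have hqS : Sb ≤ qq := by
    rw [hqq, Nat.le_div_iff_mul_le hSb0]
    nlinarith
  set c : Fin M → ℕ := fun i => ((qq : ℤ) * (z i).natAbs + (r : ℤ) * z i).toNat with hc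
  have hci : ∀ i, (c i : ℤ) = (qq : ℤ) * (z i).natAbs + (r : ℤ) * z i := by
    intro i
    apply Int.toNat_of_nonneg
    have h1 : -((z i).natAbs : ℤ) ≤ z i := by
      rw [← Int.abs_eq_natAbs]
      exact neg_abs_le _
    have h2 : (r : ℤ) < (Sb : ℤ) := by exact_mod_cast hrlt
    have h3 : (Sb : ℤ) ≤ (qq : ℤ) := by exact_mod_cast hqS
    have h4 : (0:ℤ) ≤ ((z i).natAbs : ℤ) := Int.ofNat_nonneg _
    have h5 : (0:ℤ) ≤ (r : ℤ) := Int.ofNat_nonneg _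
    nlinarith
  have hcsum : ∑ i, c i * p i = n := by
    have h1 : ((∑ i, c i * p i : ℕ) : ℤ)
        = (qq:ℤ) * (Sb:ℤ) + (r:ℤ) * (∑ i, z i * (p i:ℤ)) := by
      push_cast
      rw [hSbZ, Finset.mul_sum, Finset.mul_sum, ← Finset.sum_add_distrib]
      apply Finset.sum_congr rfl
      intro i _
      rw [hci i, ← Int.abs_eq_natAbs]
      ring
    rw [hz, mul_one] at h1
    have h2 : ((∑ i, c i * p i : ℕ) : ℤ) = (n : ℤ) := by
      rw [h1]
      exact_mod_cast hdiv.symm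
    exact_mod_cast h2
  obtain ⟨l, hl⟩ := exists_list_sum p c
  exact ⟨l, by rw [hl, hcsum]⟩

theorem length_le_sum {M : ℕ} (p : Fin M → ℕ) (hp : ∀ i, 0 < p i) :
    ∀ l : List (Fin M), l.length ≤ (l.map p).sum := by
  intro l
  induction l with
  | nil => simp
  | cons a l ih =>
    rw [List.length_cons, List.map_cons, List.sum_cons]
    have := hp a
    omega

end Rep
namespace NUE
variable {X : Type*} [MetricSpace X] [MeasurableSpace X] [BorelSpace X] (S : NUE X)

theorem condI_two {Ns : ℕ} (hcond : S.condI Ns) : 2 ≤ Ns := by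
  by_contra h
  have hNs : Ns ≤ 1 := by omega
  have h1 := hcond 1 1 le_rfl le_rfl
  have h2 : {x | Ns ≤ S.tau 2 x} = univ :=
    eq_univ_of_forall fun x => le_trans hNs (S.tau_pos (by norm_num) x)
  rw [h2, Measure.map_apply (measurable_seqComp S.Tmeas 1 1) MeasurableSet.univ,
    preimage_univ] at h1
  haveI := S.mprob 1
  rw [measure_univ] at h1
  have h3 : (1:ℝ≥0∞)/2 < 1 := ENNReal.half_lt_self one_ne_zero ENNReal.one_ne_top
  rw [one_div] at h1 h3
  exact absurd h1 (not_le.mpr h3)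

theorem window {Ns : ℕ} (hcond : S.condI Ns) {k j : ℕ} (hk : 1 ≤ k) (hj : 1 ≤ j) :
    ∃ r ∈ Finset.Icc 1 (Ns - 1),
      (((4*(Ns-1) : ℕ) : ℝ≥0∞))⁻¹ ≤ S.q k (j + r) := by
  have hNs2 : 2 ≤ Ns := S.condI_two hcond
  haveI := S.mprob k
  have hkj : 1 ≤ k + j := by omega
  set pre := (seqComp S.T k j) ⁻¹' {y | Ns ≤ S.tau (k+j) y} with hpre
  have hpreM : MeasurableSet pre :=
    measurable_seqComp S.Tmeas k j (S.measurable_le_tau hkj Ns)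
  have h1 : S.m k pre ≤ 1/2 := by
    rw [hpre, ← Measure.map_apply (measurable_seqComp S.Tmeas k j) (S.measurable_le_tau hkj Ns)]
    exact hcond k j hk hj
  have h2 : (1:ℝ≥0∞)/2 ≤ S.m k preᶜ := by
    rw [measure_compl hpreM (measure_ne_top _ _), measure_univ]
    calc (1:ℝ≥0∞)/2 = 1 - 1/2 := (ENNReal.sub_half ENNReal.one_ne_top).symm
      _ ≤ 1 - S.m k pre := tsub_le_tsub_left h1 1
  have h3 : preᶜ ∩ S.Y k ⊆ ⋃ r ∈ Finset.Icc 1 (Ns-1), (S.Y k ∩ S.hit k (j + r)) := by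
    rintro x ⟨hxp, hxY⟩
    set r := S.tau (k+j) (seqComp S.T k j x) with hr
    have hr1 : 1 ≤ r := S.tau_pos hkj _
    have hrNs : r ≤ Ns - 1 := by
      have : ¬ Ns ≤ r := hxp
      omega
    refine Set.mem_biUnion (Finset.mem_Icc.mpr ⟨hr1, hrNs⟩) ⟨hxY, ?_⟩
    exact S.hit_add hkj rfl
  have h4 : (1:ℝ≥0∞)/2 ≤ ∑ r ∈ Finset.Icc 1 (Ns-1), S.q k (j + r) := by
    calc (1:ℝ≥0∞)/2 ≤ S.m k preᶜ := h2
      _ = S.m k (preᶜ ∩ S.Y k) := (S.measure_inter_Y hk).symm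
      _ ≤ S.m k (⋃ r ∈ Finset.Icc 1 (Ns-1), (S.Y k ∩ S.hit k (j + r))) := measure_mono h3
      _ ≤ ∑ r ∈ Finset.Icc 1 (Ns-1), S.q k (j + r) := measure_biUnion_finset_le _ _
  by_contra hcon
  push_neg at hcon
  set ε := (((4*(Ns-1) : ℕ) : ℝ≥0∞))⁻¹ with hε
  have hle : ∑ r ∈ Finset.Icc 1 (Ns-1), S.q k (j + r)
      ≤ ∑ _r ∈ Finset.Icc 1 (Ns-1), ε :=
    Finset.sum_le_sum (fun r hrm => le_of_lt (hcon r hrm))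
  have hcard : (Finset.Icc 1 (Ns-1)).card = Ns - 1 := by
    rw [Nat.card_Icc]; omega
  have hsum : ∑ _r ∈ Finset.Icc 1 (Ns-1), ε = ((Ns-1 : ℕ) : ℝ≥0∞) * ε := by
    rw [Finset.sum_const, hcard, nsmul_eq_mul]
  have hval : ((Ns-1 : ℕ) : ℝ≥0∞) * ε = 4⁻¹ := by
    rw [hε]
    have hc : ((4*(Ns-1) : ℕ) : ℝ≥0∞) = 4 * ((Ns-1 : ℕ) : ℝ≥0∞) := by push_cast; ring
    rw [hc, ENNReal.mul_inv (Or.inl (by norm_num)) (Or.inl (by norm_num))]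
    have hnz : ((Ns-1 : ℕ) : ℝ≥0∞) ≠ 0 := Nat.cast_ne_zero.mpr (by omega)
    rw [← mul_assoc, mul_comm _ (4:ℝ≥0∞)⁻¹, mul_assoc,
      ENNReal.mul_inv_cancel hnz (ENNReal.natCast_ne_top _), mul_one]
  rw [hsum, hval] at hle
  have hcontra : (1:ℝ≥0∞)/2 ≤ 4⁻¹ := le_trans h4 hle
  have h5 : (4:ℝ≥0∞)⁻¹ < 2⁻¹ := by
    rw [ENNReal.inv_lt_inv]
    norm_num
  rw [one_div] at hcontra
  exact absurd hcontra (not_le.mpr h5)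

end NUE
namespace NUE
variable {X : Type*} [MetricSpace X] [MeasurableSpace X] [BorelSpace X] (S : NUE X)

theorem part1 (hi : ∃ Nsharp : ℕ, 1 ≤ Nsharp ∧ S.condI Nsharp)
    (hii : ∃ δsharp : ℝ, 0 < δsharp ∧ ∃ M : ℕ, ∃ p : Fin M → ℕ,
      (∀ i, 0 < p i) ∧ (Finset.univ.gcd p = 1) ∧
      ∀ k, 1 ≤ k → ∀ i : Fin M, ENNReal.ofReal δsharp ≤ S.m k {x | S.tau k x = p i}) :
    ∃ δ₀ : ℝ, 0 < δ₀ ∧ ∃ n₀ : ℕ, 1 ≤ n₀ ∧ S.nu5 δ₀ n₀ := by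
  obtain ⟨Ns, hNs1, hcond⟩ := hi
  obtain ⟨δs, hδs, M, p, hp, hgcd, hδ⟩ := hii
  have hNs2 : 2 ≤ Ns := S.condI_two hcond
  have hnX : Nonempty X := S.nonemptyX
  obtain ⟨x₁⟩ := hnX
  obtain ⟨D, hD⟩ : ∃ D : ℝ, ∀ x y : X, dist x y ≤ D := by
    obtain ⟨C, hC⟩ := Metric.isBounded_iff.mp S.bounded
    exact ⟨C, fun x y => hC trivial trivial⟩
  have hD0 : 0 ≤ D := le_trans dist_nonneg (hD x₁ x₁)
  have hK10 : 0 < S.K1 := S.K1_pos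
  obtain ⟨n₁, hn₁1, hrep⟩ := rep_lemma p hp hgcd
  -- basic facts
  have hM : 0 < M := by
    by_contra h
    have hM0 : M = 0 := by omega
    subst hM0
    rw [Finset.univ_eq_empty, Finset.gcd_empty] at hgcd
    exact absurd hgcd (by norm_num)
  have hδs1 : δs ≤ 1 := by
    haveI := S.mprob 1
    have h := le_trans (hδ 1 le_rfl ⟨0, hM⟩) prob_le_one
    exact ENNReal.ofReal_le_one.mp h
  set β : ℝ := δs * Real.exp (-(2 * S.K1 * D)) with hβ
  have hβ0 : 0 < β := mul_pos hδs (Real.exp_pos _)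
  have hβ1 : β ≤ 1 := by
    have h1 : Real.exp (-(2 * S.K1 * D)) ≤ 1 := Real.exp_le_one_iff.mpr (neg_nonpos.mpr (by positivity))
    nlinarith
  set rmax := n₁ + Ns with hrmax
  set δ₀ : ℝ := β^rmax * (4*(Ns:ℝ))⁻¹ with hδ₀
  have hδ₀pos : 0 < δ₀ := by
    have h4 : (0:ℝ) < 4*(Ns:ℝ) := by positivity
    positivity
  refine ⟨δ₀, hδ₀pos, n₁ + Ns + 1, by omega, ?_⟩
  intro k hk n hn
  set j := n - (n₁ + Ns) with hj
  have hj1 : 1 ≤ j := by omega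
  obtain ⟨r₀, hr₀mem, hr₀⟩ := S.window hcond hk hj1
  obtain ⟨hr₀1, hr₀2⟩ := Finset.mem_Icc.mp hr₀mem
  set t := j + r₀ with ht
  have ht1 : 1 ≤ t := by omega
  set d := n - t with hd'
  have hdn : t + d = n := by omega
  have hdlb : n₁ ≤ d := by omega
  have hdub : d ≤ rmax := by omega
  obtain ⟨l, hl⟩ := hrep d hdlb
  have hlen : l.length ≤ d := le_trans (length_le_sum p hp l) (le_of_eq hl)
  have hchain := S.chain hD hδ hk l t ht1
  rw [hl, hdn] at hchain
  -- constants
  set E : ℝ≥0∞ := ENNReal.ofReal (Real.exp (S.K1 * D)) with hE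
  set E2 : ℝ≥0∞ := E^2 with hE2
  have hE2ofReal : E2 = ENNReal.ofReal (Real.exp (2 * S.K1 * D)) := by
    rw [hE2, hE, sq, ← ENNReal.ofReal_mul (Real.exp_nonneg _), ← Real.exp_add]
    ring_nf
  have hE2inv : E2⁻¹ = ENNReal.ofReal (Real.exp (-(2 * S.K1 * D))) := by
    rw [hE2ofReal, ← ENNReal.ofReal_inv_of_pos (Real.exp_pos _), ← Real.exp_neg]
  have hE2Lne0 : ∀ L : ℕ, (E2:ℝ≥0∞)^L ≠ 0 := by
    intro L
    apply pow_ne_zero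
    rw [hE2]
    apply pow_ne_zero
    rw [hE]
    simp [Real.exp_pos (S.K1 * D), ne_of_gt, ENNReal.ofReal_pos.mpr]
  -- main lower bound on q k n
  set L := l.length with hL
  have hq : ENNReal.ofReal δ₀ ≤ S.q k n := by
    have h1 : (ENNReal.ofReal δs)^L * S.q k t / E2^L ≤ S.q k n :=
      ENNReal.div_le_of_le_mul' hchain
    have h2 : (ENNReal.ofReal δs)^L * S.q k t / E2^L
        = (ENNReal.ofReal β)^L * S.q k t := by
      rw [div_eq_mul_inv, ENNReal.inv_pow, mul_comm _ ((E2⁻¹)^L), ← mul_assoc,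
        mul_comm ((E2⁻¹)^L) _, ← mul_pow]
      congr 2
      rw [hE2inv, ← ENNReal.ofReal_mul (le_of_lt hδs)]
    have h3 : ENNReal.ofReal (β^rmax) ≤ (ENNReal.ofReal β)^L := by
      rw [← ENNReal.ofReal_pow (le_of_lt hβ0)]
      exact ENNReal.ofReal_le_ofReal
        (pow_le_pow_of_le_one (le_of_lt hβ0) hβ1 (le_trans hlen hdub))
    have h4 : ENNReal.ofReal ((4*(Ns:ℝ))⁻¹) ≤ S.q k t := by
      refine le_trans ?_ hr₀
      have h5 : ENNReal.ofReal ((4*(Ns:ℝ))⁻¹) = (((4*Ns : ℕ) : ℝ≥0∞))⁻¹ := by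
        rw [ENNReal.ofReal_inv_of_pos (by positivity)]
        congr 1
        rw [show (4*(Ns:ℝ)) = ((4*Ns : ℕ) : ℝ) by push_cast; ring, ENNReal.ofReal_natCast]
      rw [h5]
      have h6 : ((4*(Ns-1) : ℕ) : ℝ≥0∞) ≤ ((4*Ns : ℕ) : ℝ≥0∞) := by
        apply Nat.cast_le.mpr
        omega
      exact ENNReal.inv_le_inv' h6
    calc ENNReal.ofReal δ₀ = ENNReal.ofReal (β^rmax) * ENNReal.ofReal ((4*(Ns:ℝ))⁻¹) := by
          rw [hδ₀, ENNReal.ofReal_mul (by positivity)]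
      _ ≤ (ENNReal.ofReal β)^L * S.q k t := mul_le_mul' h3 h4
      _ = (ENNReal.ofReal δs)^L * S.q k t / E2^L := h2.symm
      _ ≤ S.q k n := h1
  -- conclude nu5 bound
  refine le_trans hq ?_
  rw [Measure.map_apply (measurable_seqComp S.Tmeas k n) (S.Ymeas (k+n))]
  exact measure_mono (fun x hx => hx.2)

end NUE
namespace NUE
variable {X : Type*} [MetricSpace X] [MeasurableSpace X] [BorelSpace X] (S : NUE X)

theorem tail_decomp {k j N : ℕ} (hk : 1 ≤ k) (hj : 1 ≤ j) :
    S.Y k ∩ (seqComp S.T k j)⁻¹' {y | N ≤ S.tau (k+j) y}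
      ⊆ ⋃ s ∈ Finset.range (j+1),
          ((S.Y k ∩ S.hit k s) ∩ (seqComp S.T k s)⁻¹' {y | N + (j - s) ≤ S.tau (k+s) y}) := by
  classical
  rintro x ⟨hxY, hxp⟩
  set P : ℕ → Prop := fun t => x ∈ S.hit k t with hP
  have hP0 : P 0 := by rw [hP]; simp only [S.hit_zero]; exact hxY
  set s := Nat.findGreatest P j with hs
  have hsle : s ≤ j := Nat.findGreatest_le j
  have hPs : P s := Nat.findGreatest_spec (Nat.zero_le j) hP0
  set r := S.tau (k+s) (seqComp S.T k s x) with hr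
  have hks : 1 ≤ k + s := by omega
  have hr1 : 1 ≤ r := S.tau_pos hks _
  have hhit : x ∈ S.hit k (s + r) := S.hit_add hks rfl
  have hsr : j < s + r := by
    by_contra hcon
    push_neg at hcon
    exact (Nat.findGreatest_is_greatest (show Nat.findGreatest P j < s + r by omega) hcon) hhit
  have htau : S.tau (k+j) (seqComp S.T k j x) ≤ s + r - j := by
    apply S.tau_le
    · omega
    · have h1 : seqComp S.T (k+j) (s + r - j) (seqComp S.T k j x) = seqComp S.T k (s+r) x := by
        rw [← seqComp_add']
        congr 1
        omega
      rw [h1]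
      have h2 : k + j + (s + r - j) = k + (s + r) := by omega
      rw [h2]
      exact hhit
  have hN : N ≤ S.tau (k+j) (seqComp S.T k j x) := hxp
  refine Set.mem_biUnion (Finset.mem_range.mpr (by omega)) ⟨⟨hxY, hPs⟩, ?_⟩
  show N + (j - s) ≤ S.tau (k+s) (seqComp S.T k s x)
  omega

theorem part2 (qq : ℝ) (hqq : 1 < qq)
    (hmom : ∃ B : ℝ, ∀ k, 1 ≤ k → ∫⁻ x, (S.tau k x : ℝ≥0∞) ^ qq ∂(S.m k) ≤ ENNReal.ofReal B) :
    ∃ N₀ : ℕ, ∀ Nsharp, N₀ ≤ Nsharp → S.condI Nsharp := by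
  classical
  obtain ⟨B, hB⟩ := hmom
  have hnX : Nonempty X := S.nonemptyX
  obtain ⟨x₁⟩ := hnX
  obtain ⟨D, hD⟩ : ∃ D : ℝ, ∀ x y : X, dist x y ≤ D := by
    obtain ⟨C, hC⟩ := Metric.isBounded_iff.mp S.bounded
    exact ⟨C, fun x y => hC trivial trivial⟩
  have hD0 : 0 ≤ D := le_trans dist_nonneg (hD x₁ x₁)
  set E2 : ℝ≥0∞ := (ENNReal.ofReal (Real.exp (S.K1 * D)))^2 with hE2
  have hE2top : E2 ≠ ⊤ := by
    rw [hE2]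
    exact ENNReal.pow_ne_top ENNReal.ofReal_ne_top
  have hE21 : 1 ≤ E2 := by
    rw [hE2]
    apply one_le_pow_of_one_le'
    rw [← ENNReal.ofReal_one]
    exact ENNReal.ofReal_le_ofReal (Real.one_le_exp (mul_nonneg (le_of_lt S.K1_pos) hD0))
  -- Markov inequality
  have markov : ∀ k r : ℕ, 1 ≤ k → 1 ≤ r →
      S.m k {x | r ≤ S.tau k x} ≤ ENNReal.ofReal B * (((r:ℕ) : ℝ≥0∞)^qq)⁻¹ := by
    intro k r hk hr
    have hqq0 : (0:ℝ) ≤ qq := by linarith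
    have hrne0 : (((r:ℕ):ℝ≥0∞))^qq ≠ 0 := by
      apply ne_of_gt
      calc (0:ℝ≥0∞) < 1 := one_pos
        _ = (1:ℝ≥0∞)^qq := (ENNReal.one_rpow qq).symm
        _ ≤ ((r:ℕ):ℝ≥0∞)^qq := ENNReal.rpow_le_rpow (by exact_mod_cast hr) hqq0
    have hrnetop : (((r:ℕ):ℝ≥0∞))^qq ≠ ⊤ :=
      ENNReal.rpow_ne_top_of_nonneg hqq0 (ENNReal.natCast_ne_top r)
    have hsetm : MeasurableSet {x | r ≤ S.tau k x} := S.measurable_le_tau hk r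
    have h1 : (((r:ℕ):ℝ≥0∞))^qq * S.m k {x | r ≤ S.tau k x}
        ≤ ∫⁻ x, (S.tau k x : ℝ≥0∞) ^ qq ∂(S.m k) := by
      have htm : Measurable (fun x => ((S.tau k x : ℕ) : ℝ≥0∞)) :=
        measurable_from_nat.comp
          (measurable_to_countable' (fun n => S.measurable_tau_eq hk n))
      calc (((r:ℕ):ℝ≥0∞))^qq * S.m k {x | r ≤ S.tau k x}
          = ∫⁻ _ in {x | r ≤ S.tau k x}, (((r:ℕ):ℝ≥0∞))^qq ∂(S.m k) :=
            (setLIntegral_const _ _).symm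
        _ ≤ ∫⁻ x in {x | r ≤ S.tau k x}, (S.tau k x : ℝ≥0∞) ^ qq ∂(S.m k) := by
            apply setLIntegral_mono (htm.pow measurable_const)
            intro x hx
            exact ENNReal.rpow_le_rpow (by exact_mod_cast hx) hqq0
        _ ≤ ∫⁻ x, (S.tau k x : ℝ≥0∞) ^ qq ∂(S.m k) := setLIntegral_le_lintegral _ _
    have h2 := le_trans h1 (hB k hk)
    rw [← div_eq_mul_inv]
    exact (ENNReal.le_div_iff_mul_le (Or.inl hrne0) (Or.inl hrnetop)).mpr
      (by rw [mul_comm]; exact h2)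
  -- the summable tail
  set g : ℕ → ℝ≥0∞ := fun i => ((((i+1 : ℕ)) : ℝ≥0∞)^qq)⁻¹ with hg
  have hgfin : ∑' i, g i ≠ ⊤ := by
    have hcoe : ∀ i : ℕ, g i = ((((((i+1:ℕ)) : ℝ≥0))^qq)⁻¹ : ℝ≥0) := by
      intro i
      have hne : (((i+1:ℕ)) : ℝ≥0) ≠ 0 := Nat.cast_ne_zero.mpr (by omega)
      show ((((i+1:ℕ)) : ℝ≥0∞)^qq)⁻¹ = _
      rw [← ENNReal.coe_natCast (i+1), ← ENNReal.coe_rpow_of_ne_zero hne,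
        ← ENNReal.coe_inv (ne_of_gt
          (NNReal.rpow_pos (lt_of_le_of_ne zero_le (Ne.symm hne))))]
    calc ∑' i, g i = ∑' i, (((((((i+1:ℕ)) : ℝ≥0))^qq)⁻¹ : ℝ≥0) : ℝ≥0∞) := by
          exact tsum_congr hcoe
      _ ≠ ⊤ := by
          rw [ENNReal.tsum_coe_ne_top_iff_summable]
          have h0 : Summable (fun n : ℕ => (((n:ℝ≥0))^qq)⁻¹) :=
            NNReal.summable_rpow_inv.mpr hqq
          exact (NNReal.summable_nat_add_iff 1).mpr h0
  have htail := ENNReal.tendsto_sum_nat_add g hgfin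
  -- choose the threshold
  set a : ℝ≥0∞ := E2 * (ENNReal.ofReal B + 1) with ha
  have ha0 : a ≠ 0 := by
    rw [ha]
    apply mul_ne_zero
    · exact ne_of_gt (lt_of_lt_of_le one_pos hE21)
    · exact ne_of_gt (lt_of_lt_of_le one_pos le_add_self)
  have hatop : a ≠ ⊤ := by
    rw [ha]
    exact ENNReal.mul_ne_top hE2top (ENNReal.add_ne_top.mpr ⟨ENNReal.ofReal_ne_top, ENNReal.one_ne_top⟩)
  set ε : ℝ≥0∞ := (2 * a)⁻¹ with hε
  have hεpos : (0:ℝ≥0∞) < ε := by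
    rw [hε]
    exact ENNReal.inv_pos.mpr (ENNReal.mul_ne_top (by norm_num) hatop)
  obtain ⟨N₀', hN₀'⟩ := Filter.eventually_atTop.mp (htail.eventually (gt_mem_nhds hεpos))
  refine ⟨N₀' + 1, ?_⟩
  intro Ns hNs k j hk hj
  have hNs1 : 1 ≤ Ns := by omega
  have hkj : 1 ≤ k + j := by omega
  -- rewrite the target measure
  rw [Measure.map_apply (measurable_seqComp S.Tmeas k j) (S.measurable_le_tau hkj Ns)]
  set pre := (seqComp S.T k j)⁻¹' {y | Ns ≤ S.tau (k+j) y} with hpre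
  have hpreM : MeasurableSet pre :=
    measurable_seqComp S.Tmeas k j (S.measurable_le_tau hkj Ns)
  have e1 : S.m k pre = S.m k (S.Y k ∩ pre) := by
    rw [Set.inter_comm, S.measure_inter_Y hk]
  rw [e1]
  -- decompose and bound
  have hsub := S.tail_decomp (N := Ns) hk hj
  have hterm : ∀ s ∈ Finset.range (j+1),
      S.m k ((S.Y k ∩ S.hit k s) ∩ (seqComp S.T k s)⁻¹' {y | Ns + (j - s) ≤ S.tau (k+s) y})
        ≤ E2 * (ENNReal.ofReal B * ((((Ns + (j - s) : ℕ)) : ℝ≥0∞)^qq)⁻¹) := by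
    intro s hs
    have hks : 1 ≤ k + s := by omega
    have hr1 : 1 ≤ Ns + (j - s) := by omega
    set A : Set X := {y | Ns + (j - s) ≤ S.tau (k+s) y} with hA
    have hAm : MeasurableSet A := S.measurable_le_tau hks _
    rcases Nat.eq_zero_or_pos s with hs0 | hs1
    · subst hs0
      have h1 : (S.Y k ∩ S.hit k 0) ∩ (seqComp S.T k 0)⁻¹' A ⊆ A := by
        intro x hx
        exact hx.2
      calc S.m k ((S.Y k ∩ S.hit k 0) ∩ (seqComp S.T k 0)⁻¹' A) ≤ S.m k A := measure_mono h1
        _ ≤ ENNReal.ofReal B * ((((Ns + (j - 0) : ℕ)) : ℝ≥0∞)^qq)⁻¹ := markov k _ hk hr1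
        _ ≤ E2 * (ENNReal.ofReal B * ((((Ns + (j - 0) : ℕ)) : ℝ≥0∞)^qq)⁻¹) := by
            nth_rewrite 1 [← one_mul (ENNReal.ofReal B * _)]
            exact mul_le_mul_left hE21 _
    · -- s ≥ 1 : use the comparison
      have hEs : S.m k ((S.Y k ∩ S.hit k s) ∩ (seqComp S.T k s)⁻¹' A) = S.nuM k s A :=
        (S.nuM_apply k s hAm).symm
      rw [hEs]
      set Y' := S.Y (k+s) with hY'
      have hY'm : MeasurableSet Y' := S.Ymeas (k+s)
      have hsplit : S.nuM k s A = S.nuM k s (A ∩ Y') := by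
        have hset : (S.Y k ∩ S.hit k s) ∩ (seqComp S.T k s)⁻¹' (A \ Y') = ∅ := by
          ext x
          simp only [mem_empty_iff_false, iff_false]
          rintro ⟨⟨_, hxh⟩, hxd⟩
          exact hxd.2 hxh
        have hd : S.nuM k s (A \ Y') = 0 := by
          rw [S.nuM_apply k s (hAm.diff hY'm), hset, measure_empty]
        calc S.nuM k s A = S.nuM k s (A ∩ Y') + S.nuM k s (A \ Y') := by
              rw [measure_inter_add_diff _ hY'm]
          _ = S.nuM k s (A ∩ Y') := by rw [hd, add_zero]
      have hcmp := (S.compare hD hk hs1 (hAm.inter hY'm) inter_subset_right).1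
      calc S.nuM k s A ≤ S.nuM k s (A ∩ Y') := le_of_eq hsplit
        _ ≤ E2 * S.m (k+s) (A ∩ Y') := hcmp
        _ ≤ E2 * S.m (k+s) A := mul_le_mul_right (measure_mono inter_subset_left) _
        _ ≤ E2 * (ENNReal.ofReal B * ((((Ns + (j - s) : ℕ)) : ℝ≥0∞)^qq)⁻¹) :=
            mul_le_mul_right (markov (k+s) _ hks hr1) _
  -- sum up
  have hbound : S.m k (S.Y k ∩ pre)
      ≤ E2 * ENNReal.ofReal B * ∑ s ∈ Finset.range (j+1),
          ((((Ns + (j - s) : ℕ)) : ℝ≥0∞)^qq)⁻¹ := by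
    calc S.m k (S.Y k ∩ pre)
        ≤ S.m k (⋃ s ∈ Finset.range (j+1),
            ((S.Y k ∩ S.hit k s) ∩ (seqComp S.T k s)⁻¹' {y | Ns + (j - s) ≤ S.tau (k+s) y})) :=
          measure_mono hsub
      _ ≤ ∑ s ∈ Finset.range (j+1),
            S.m k ((S.Y k ∩ S.hit k s) ∩ (seqComp S.T k s)⁻¹' {y | Ns + (j-s) ≤ S.tau (k+s) y}) :=
          measure_biUnion_finset_le _ _
      _ ≤ ∑ s ∈ Finset.range (j+1),
            E2 * (ENNReal.ofReal B * ((((Ns + (j - s) : ℕ)) : ℝ≥0∞)^qq)⁻¹) :=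
          Finset.sum_le_sum hterm
      _ = E2 * ENNReal.ofReal B * ∑ s ∈ Finset.range (j+1),
            ((((Ns + (j - s) : ℕ)) : ℝ≥0∞)^qq)⁻¹ := by
          rw [Finset.mul_sum]
          apply Finset.sum_congr rfl
          intro s _
          ring
  have hreflect : ∑ s ∈ Finset.range (j+1), ((((Ns + (j - s) : ℕ)) : ℝ≥0∞)^qq)⁻¹
      = ∑ i ∈ Finset.range (j+1), ((((Ns + i : ℕ)) : ℝ≥0∞)^qq)⁻¹ := by
    have := Finset.sum_range_reflect (fun i => ((((Ns + i : ℕ)) : ℝ≥0∞)^qq)⁻¹) (j+1)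
    rw [← this]
    apply Finset.sum_congr rfl
    intro s hsm
    have h : j + 1 - 1 - s = j - s := by omega
    rw [h]
  have htsum : ∑ i ∈ Finset.range (j+1), ((((Ns + i : ℕ)) : ℝ≥0∞)^qq)⁻¹
      ≤ ∑' i, g (i + (Ns - 1)) := by
    have heq : ∀ i : ℕ, ((((Ns + i : ℕ)) : ℝ≥0∞)^qq)⁻¹ = g (i + (Ns - 1)) := by
      intro i
      have h : Ns + i = i + (Ns - 1) + 1 := by omega
      rw [hg]
      simp only
      rw [h]
    calc ∑ i ∈ Finset.range (j+1), ((((Ns + i : ℕ)) : ℝ≥0∞)^qq)⁻¹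
        = ∑ i ∈ Finset.range (j+1), g (i + (Ns - 1)) := Finset.sum_congr rfl (fun i _ => heq i)
      _ ≤ ∑' i, g (i + (Ns - 1)) := ENNReal.sum_le_tsum _
  have hεbound : ∑' i, g (i + (Ns - 1)) < ε := hN₀' (Ns - 1) (by omega)
  calc S.m k (S.Y k ∩ pre)
      ≤ E2 * ENNReal.ofReal B * ∑' i, g (i + (Ns - 1)) := by
        refine le_trans hbound (mul_le_mul_right ?_ _)
        rw [hreflect]
        exact htsum
    _ ≤ a * ε := by
        apply mul_le_mul'
        · rw [ha]
          exact mul_le_mul_right (le_add_right le_rfl) _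
        · exact le_of_lt hεbound
    _ ≤ 1 / 2 := by
        rw [hε, ENNReal.mul_inv (Or.inl (by norm_num)) (Or.inl (by norm_num)),
          ← mul_assoc, mul_comm a (2:ℝ≥0∞)⁻¹, mul_assoc,
          ENNReal.mul_inv_cancel ha0 hatop, mul_one, one_div]

end NUE

theorem stmt2 {X : Type*} [MetricSpace X] [MeasurableSpace X] [BorelSpace X]
    (S : NUE X)
    -- (i)
    (hi : ∃ Nsharp : ℕ, 1 ≤ Nsharp ∧ S.condI Nsharp)
    -- (ii)
    (hii : ∃ δsharp : ℝ, 0 < δsharp ∧ ∃ M : ℕ, ∃ p : Fin M → ℕ,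
      (∀ i, 0 < p i) ∧ (Finset.univ.gcd p = 1) ∧
      ∀ k, 1 ≤ k → ∀ i : Fin M, ENNReal.ofReal δsharp ≤ S.m k {x | S.tau k x = p i}) :
    -- (NU5) holds
    (∃ δ₀ : ℝ, 0 < δ₀ ∧ ∃ n₀ : ℕ, 1 ≤ n₀ ∧ S.nu5 δ₀ n₀) ∧
    -- moreover, a uniform p-th moment bound for the return times implies (i)
    (∀ q : ℝ, 1 < q →
      (∃ B : ℝ, ∀ k, 1 ≤ k → ∫⁻ x, (S.tau k x : ℝ≥0∞) ^ q ∂(S.m k) ≤ ENNReal.ofReal B) →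
      ∃ N₀ : ℕ, ∀ Nsharp, N₀ ≤ Nsharp → S.condI Nsharp) := by

  constructor
  · exact S.part1 hi hii
  · intro q hq hmom
    exact S.part2 q hq hmom

end
end

section
/- Suppose the sequence (T_n) satisfies hypotheses (NU1)–(NU5) of the nonstationary nonuniformly expanding setup, and fix K_1, K_2 as in the regularity definition. Then for every k ≥ 1: the measure m_k is regular with tail bound r = h^k with respect to T_k, T_{k+1}, …, where h^k(n) = m_k(τ_k ≥ n); and every nonnegative measure μ on Y_k with |μ|_{LL,k} ≤ K_2 is regular with tail bound r = μ(Y_k) e^{diam(X) K_2} h^k with respect to T_k, T_{k+1}, …. -/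
open MeasureTheory Set Filter
open scoped NNReal ENNReal

noncomputable section

set_option linter.unusedSectionVars false
set_option linter.unusedVariables false

section Helpers

variable {X : Type*} [MetricSpace X] [MeasurableSpace X] [BorelSpace X]

lemma seqComp_measurable {T : ℕ → X → X} (hT : ∀ i, Measurable (T i)) (k n : ℕ) :
    Measurable (seqComp T k n) := by
  induction n with
  | zero => exact measurable_id
  | succ n ih => exact (hT (k + n)).comp ih

lemma NUE.tau_ge_iff (S : NUE X) {k : ℕ} (hk : 1 ≤ k) (x : X) (n : ℕ) :
    n ≤ S.tau k x ↔ ∀ j < n, ¬(1 ≤ j ∧ seqComp S.T k j x ∈ S.Y (k + j)) := by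
  constructor
  · intro h j hj hmem
    have h2 : S.tau k x ≤ j := Nat.sInf_le hmem
    omega
  · intro h
    by_contra hlt
    push_neg at hlt
    exact h _ hlt ⟨(S.retFin k hk x).1, (S.retFin k hk x).2⟩

lemma NUE.measurableSet_tau_ge (S : NUE X) {k : ℕ} (hk : 1 ≤ k) (n : ℕ) :
    MeasurableSet {x | n ≤ S.tau k x} := by
  have he : {x | n ≤ S.tau k x} =
      ⋂ j ∈ Set.Iio n, {x : X | ¬(1 ≤ j ∧ seqComp S.T k j x ∈ S.Y (k + j))} := by
    ext x
    simp only [Set.mem_setOf_eq, Set.mem_iInter, Set.mem_Iio, S.tau_ge_iff hk x n]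
  rw [he]
  refine MeasurableSet.biInter (Set.to_countable _) fun j _ => ?_
  by_cases hj : 1 ≤ j
  · have : {x : X | ¬(1 ≤ j ∧ seqComp S.T k j x ∈ S.Y (k + j))}
        = (seqComp S.T k j ⁻¹' S.Y (k + j))ᶜ := by
      ext x; simp [hj]
    rw [this]
    exact ((seqComp_measurable S.Tmeas k j) (S.Ymeas _)).compl
  · have : {x : X | ¬(1 ≤ j ∧ seqComp S.T k j x ∈ S.Y (k + j))} = Set.univ := by
      ext x; simp [hj]
    rw [this]; exact MeasurableSet.univ

lemma NUE.measurableSet_tau_eq (S : NUE X) {k : ℕ} (hk : 1 ≤ k) (l : ℕ) :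
    MeasurableSet {x | S.tau k x = l} := by
  have he : {x | S.tau k x = l} = {x | l ≤ S.tau k x} \ {x | l + 1 ≤ S.tau k x} := by
    ext x; simp only [Set.mem_setOf_eq, Set.mem_diff]; omega
  rw [he]
  exact (S.measurableSet_tau_ge hk l).diff (S.measurableSet_tau_ge hk (l + 1))

lemma NUE.mYc_zero (S : NUE X) {k : ℕ} (hk : 1 ≤ k) : S.m k (S.Y k)ᶜ = 0 := by
  haveI := S.mprob k
  have := measure_compl (S.Ymeas k) (measure_ne_top (S.m k) _)
  rw [S.mY k hk, measure_univ] at this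
  simpa using this

lemma LLBoundedBy.mono_const {m : Measure X} {Y : Set X} {μ : Measure X} {c c' : ℝ}
    (h : LLBoundedBy m Y μ c) (hcc : c ≤ c') : LLBoundedBy m Y μ c' := by
  obtain ⟨ρ, h0, hm, heq, hb⟩ := h
  exact ⟨ρ, h0, hm, heq, fun y hy y' hy' => (hb y hy y' hy').trans
    (mul_le_mul_of_nonneg_left
      (Real.exp_le_exp.2 (mul_le_mul_of_nonneg_right hcc dist_nonneg)) (h0 y'))⟩

lemma continuousOn_of_LL {Y : Set X} {f : X → ℝ} {c : ℝ}
    (hb : ∀ y ∈ Y, ∀ y' ∈ Y, f y ≤ f y' * Real.exp (c * dist y y')) :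
    ContinuousOn f Y := by
  intro y₀ hy₀
  have hcd : Continuous fun y : X => Real.exp (c * dist y y₀) :=
    Real.continuous_exp.comp (continuous_const.mul (continuous_id.dist continuous_const))
  have hu : Filter.Tendsto (fun y => f y₀ * Real.exp (c * dist y y₀))
      (nhdsWithin y₀ Y) (nhds (f y₀)) := by
    have h1 : Filter.Tendsto (fun y => f y₀ * Real.exp (c * dist y y₀)) (nhds y₀)
        (nhds (f y₀ * Real.exp (c * dist y₀ y₀))) :=
      ((continuous_const.mul hcd).tendsto y₀)
    simpa using h1.mono_left nhdsWithin_le_nhds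
  have hl : Filter.Tendsto (fun y => f y₀ / Real.exp (c * dist y y₀))
      (nhdsWithin y₀ Y) (nhds (f y₀)) := by
    have h1 : Filter.Tendsto (fun y => f y₀ / Real.exp (c * dist y y₀)) (nhds y₀)
        (nhds (f y₀ / Real.exp (c * dist y₀ y₀))) :=
      ((continuous_const.div hcd (fun y => (Real.exp_pos _).ne')).tendsto y₀)
    simpa using h1.mono_left nhdsWithin_le_nhds
  refine tendsto_of_tendsto_of_tendsto_of_le_of_le' hl hu ?_ ?_
  · filter_upwards [self_mem_nhdsWithin] with y hy
    have h1 := hb y₀ hy₀ y hy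
    rw [dist_comm] at h1
    exact (div_le_iff₀ (Real.exp_pos _)).2 h1
  · filter_upwards [self_mem_nhdsWithin] with y hy
    exact hb y hy y₀ hy₀

lemma measurable_indicator_of_continuousOn {Y : Set X} {f : X → ℝ}
    (hY : MeasurableSet Y) (hf : ContinuousOn f Y) : Measurable (Y.indicator f) := by
  have h1 : Y.indicator f = Function.extend (Subtype.val : Y → X)
      (fun y : Y => f y) (fun _ => 0) := by
    funext x
    by_cases hx : x ∈ Y
    · rw [Set.indicator_of_mem hx]
      have hxx : x = ((⟨x, hx⟩ : Y) : X) := rfl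
      rw [hxx, Subtype.val_injective.extend_apply]
    · rw [Set.indicator_of_notMem hx, Function.extend_apply']
      rintro ⟨a, rfl⟩
      exact hx a.2
  rw [h1]
  exact (MeasurableEmbedding.subtype_coe hY).measurable_extend
    (continuousOn_iff_continuous_restrict.mp hf).measurable measurable_const

lemma map_withDensity_comp {ν : Measure X} {F : X → X} {h : X → ℝ≥0∞}
    (hF : Measurable F) (hh : Measurable h) :
    Measure.map F (ν.withDensity fun x => h (F x)) = (Measure.map F ν).withDensity h := by
  ext s hs
  rw [Measure.map_apply hF hs, withDensity_apply _ (hF hs), withDensity_apply _ hs,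
    setLIntegral_map hs hh hF]

lemma LLBoundedBy.sum_meas {ι : Type*} [Countable ι] {m : Measure X} {Y : Set X} {c : ℝ}
    {ν : ι → Measure X} (hν : ∀ i, LLBoundedBy m Y (ν i) c)
    (hYc : m Yᶜ = 0) (hY0 : m Y ≠ 0) (hfin : Measure.sum ν Set.univ ≠ ⊤) :
    LLBoundedBy m Y (Measure.sum ν) c := by
  choose ρ hρ0 hρm hρeq hρb using hν
  set g : X → ℝ≥0∞ := fun x => ∑' i, ENNReal.ofReal (ρ i x) with hgdef
  have hgm : Measurable g := Measurable.ennreal_tsum fun i => (hρm i).ennreal_ofReal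
  have hfun : (∑' i, fun x => ENNReal.ofReal (ρ i x)) = g :=
    funext fun x => ENNReal.tsum_apply
  have hsum : Measure.sum ν = m.withDensity g := by
    have h1 : Measure.sum ν = Measure.sum fun i => m.withDensity fun x => ENNReal.ofReal (ρ i x) := by
      congr 1; funext i; exact hρeq i
    rw [h1, ← withDensity_tsum fun i => (hρm i).ennreal_ofReal, hfun]
  have hint : ∫⁻ x, g x ∂m ≠ ⊤ := by
    have h2 := hfin
    rw [hsum, withDensity_apply _ MeasurableSet.univ, Measure.restrict_univ] at h2
    exact h2
  have hae : ∀ᵐ x ∂m, g x < ⊤ := ae_lt_top hgm hint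
  obtain ⟨y₀, hy₀Y, hy₀⟩ : ∃ y₀ ∈ Y, g y₀ ≠ ⊤ := by
    by_contra hcon
    push_neg at hcon
    have hsub : Y ⊆ {x | ¬g x < ⊤} := fun y hy => by
      simp only [Set.mem_setOf_eq, not_lt, top_le_iff]
      exact hcon y hy
    exact hY0 (measure_mono_null hsub (ae_iff.mp hae))
  have hb : ∀ y ∈ Y, ∀ y' ∈ Y, g y ≤ g y' * ENNReal.ofReal (Real.exp (c * dist y y')) := by
    intro y hy y' hy'
    calc g y ≤ ∑' i, ENNReal.ofReal (ρ i y') * ENNReal.ofReal (Real.exp (c * dist y y')) := by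
          refine ENNReal.tsum_le_tsum fun i => ?_
          rw [← ENNReal.ofReal_mul (hρ0 i y')]
          exact ENNReal.ofReal_le_ofReal (hρb i y hy y' hy')
      _ = g y' * ENNReal.ofReal (Real.exp (c * dist y y')) := ENNReal.tsum_mul_right
  have hfinY : ∀ y ∈ Y, g y ≠ ⊤ := fun y hy =>
    ne_top_of_le_ne_top (ENNReal.mul_ne_top hy₀ ENNReal.ofReal_ne_top) (hb y hy y₀ hy₀Y)
  refine ⟨fun x => (g x).toReal, fun x => ENNReal.toReal_nonneg, hgm.ennreal_toReal, ?_, ?_⟩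
  · rw [hsum]
    refine (withDensity_congr_ae ?_).symm
    filter_upwards [hae] with x hx
    exact ENNReal.ofReal_toReal hx.ne
  · intro y hy y' hy'
    have h1 := hb y hy y' hy'
    calc (g y).toReal
        ≤ (g y' * ENNReal.ofReal (Real.exp (c * dist y y'))).toReal :=
          ENNReal.toReal_mono (ENNReal.mul_ne_top (hfinY y' hy') ENNReal.ofReal_ne_top) h1
      _ = (g y').toReal * Real.exp (c * dist y y') := by
          rw [ENNReal.toReal_mul, ENNReal.toReal_ofReal (Real.exp_nonneg _)]

lemma LL_measure_bound {m μ : Measure X} {Y : Set X} {c : ℝ}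
    [IsProbabilityMeasure m] (hbd : Bornology.IsBounded (Set.univ : Set X))
    (hY : MeasurableSet Y) (hm1 : m Y = 1) (hc : 0 ≤ c)
    (hLL : LLBoundedBy m Y μ c) :
    ∀ s : Set X, MeasurableSet s →
      μ s ≤ ENNReal.ofReal ((μ Y).toReal * Real.exp (c * Metric.diam (Set.univ : Set X))) * m s := by
  obtain ⟨ρ, hρ0, hρm, hρeq, hρb⟩ := hLL
  obtain ⟨y₀, hy₀⟩ : Y.Nonempty :=
    nonempty_of_measure_ne_zero (by rw [hm1]; exact one_ne_zero)
  set D := Metric.diam (Set.univ : Set X) with hD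
  have hDnn : 0 ≤ D := Metric.diam_nonneg
  have hbnd0 : ∀ y ∈ Y, ∀ y' ∈ Y, ρ y ≤ ρ y' * Real.exp (c * D) := by
    intro y hy y' hy'
    refine (hρb y hy y' hy').trans (mul_le_mul_of_nonneg_left ?_ (hρ0 y'))
    exact Real.exp_le_exp.2 (mul_le_mul_of_nonneg_left
      (Metric.dist_le_diam_of_mem hbd trivial trivial) hc)
  have hμY : μ Y = ∫⁻ y in Y, ENNReal.ofReal (ρ y) ∂m := by
    rw [hρeq, withDensity_apply _ hY]
  have hμYfin : μ Y ≠ ⊤ := by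
    have h1 : μ Y ≤ ENNReal.ofReal (ρ y₀ * Real.exp (c * D)) * m Y := by
      rw [hμY, ← setLIntegral_const]
      exact setLIntegral_mono measurable_const fun y hy =>
        ENNReal.ofReal_le_ofReal (hbnd0 y hy y₀ hy₀)
    exact ne_top_of_le_ne_top (ENNReal.mul_ne_top ENNReal.ofReal_ne_top (measure_ne_top m Y)) h1
  have hkey : ∀ y ∈ Y, ρ y ≤ (μ Y).toReal * Real.exp (c * D) := by
    intro y hy
    have h1 : ∀ y' ∈ Y, ρ y / Real.exp (c * D) ≤ ρ y' := fun y' hy' =>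
      (div_le_iff₀ (Real.exp_pos _)).2 (hbnd0 y hy y' hy')
    have h2 : ENNReal.ofReal (ρ y / Real.exp (c * D)) * m Y ≤ μ Y := by
      rw [hμY, ← setLIntegral_const]
      exact setLIntegral_mono hρm.ennreal_ofReal fun y' hy' =>
        ENNReal.ofReal_le_ofReal (h1 y' hy')
    rw [hm1, mul_one] at h2
    have h3 : ρ y / Real.exp (c * D) ≤ (μ Y).toReal :=
      (ENNReal.ofReal_le_iff_le_toReal hμYfin).1 h2
    calc ρ y = ρ y / Real.exp (c * D) * Real.exp (c * D) := by
          field_simp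
      _ ≤ (μ Y).toReal * Real.exp (c * D) :=
          mul_le_mul_of_nonneg_right h3 (Real.exp_nonneg _)
  intro s hs
  have hYc : m Yᶜ = 0 := by
    have := measure_compl hY (measure_ne_top m Y)
    rw [hm1, measure_univ] at this
    simpa using this
  have haeY : ∀ᵐ x ∂m, x ∈ Y := by
    rw [ae_iff]
    exact hYc
  have hμs : μ s = ∫⁻ x in s, ENNReal.ofReal (ρ x) ∂m := by
    rw [hρeq, withDensity_apply _ hs]
  rw [hμs]
  calc ∫⁻ x in s, ENNReal.ofReal (ρ x) ∂m
      ≤ ∫⁻ _ in s, ENNReal.ofReal ((μ Y).toReal * Real.exp (c * D)) ∂m := by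
        refine lintegral_mono_ae ?_
        filter_upwards [ae_restrict_of_ae haeY] with x hx
        exact ENNReal.ofReal_le_ofReal (hkey x hx)
    _ = ENNReal.ofReal ((μ Y).toReal * Real.exp (c * D)) * m s := setLIntegral_const _ _

lemma LL_finite {m μ : Measure X} {Y : Set X} {c : ℝ}
    [IsProbabilityMeasure m] (hbd : Bornology.IsBounded (Set.univ : Set X))
    (hY : MeasurableSet Y) (hm1 : m Y = 1) (hc : 0 ≤ c)
    (hLL : LLBoundedBy m Y μ c) : μ Set.univ ≠ ⊤ := by
  refine ne_top_of_le_ne_top (ENNReal.mul_ne_top ENNReal.ofReal_ne_top (measure_ne_top m _))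
    (LL_measure_bound hbd hY hm1 hc hLL Set.univ MeasurableSet.univ)

lemma NUE.piece_LL (S : NUE X) {K₂ : ℝ} (hK₂0 : 0 ≤ K₂) {k l : ℕ} (hk : 1 ≤ k)
    {a : Set X} (haP : a ∈ S.P k) (haY : a ⊆ S.Y k) (hal : ∀ x ∈ a, S.tau k x = l)
    {ρ₀ : X → ℝ} (hρ0 : ∀ x, 0 ≤ ρ₀ x) (hρm : Measurable ρ₀)
    (hρb : ∀ y ∈ S.Y k, ∀ y' ∈ S.Y k, ρ₀ y ≤ ρ₀ y' * Real.exp (K₂ * dist y y')) :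
    LLBoundedBy (S.m (k + l)) (S.Y (k + l))
      (Measure.map (seqComp S.T k l)
        (((S.m k).withDensity fun x => ENNReal.ofReal (ρ₀ x)).restrict a))
      (S.K + S.lam⁻¹ * K₂) := by
  haveI := S.mprob 1
  haveI hXne : Nonempty X :=
    ⟨(nonempty_of_measure_ne_zero (s := S.Y 1)
      (by rw [S.mY 1 le_rfl]; exact one_ne_zero)).choose⟩
  have hlam0 : 0 < S.lam := lt_trans one_pos S.hlam
  obtain ⟨hbij, hexp, hζLL⟩ := S.nu3 k hk a haP haY l hal
  obtain ⟨ζ, hζ0, hζm, hζeq, hζb⟩ := hζLL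
  set F := seqComp S.T k l with hF
  have hFm : Measurable F := seqComp_measurable S.Tmeas k l
  set inv := Function.invFunOn F a with hinv
  have hinvmem : ∀ y ∈ S.Y (k + l), inv y ∈ a ∧ F (inv y) = y := by
    intro y hy
    obtain ⟨x, hx, hfx⟩ := hbij.surjOn hy
    exact ⟨Function.invFunOn_mem ⟨x, hx, hfx⟩, Function.invFunOn_eq ⟨x, hx, hfx⟩⟩
  have hφb : ∀ y ∈ S.Y (k + l), ∀ y' ∈ S.Y (k + l),
      ρ₀ (inv y) ≤ ρ₀ (inv y') * Real.exp ((S.lam⁻¹ * K₂) * dist y y') := by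
    intro y hy y' hy'
    obtain ⟨hxm, hxf⟩ := hinvmem y hy
    obtain ⟨hxm', hxf'⟩ := hinvmem y' hy'
    have hexp1 := hexp _ hxm _ hxm'
    rw [hxf, hxf'] at hexp1
    have hd : dist (inv y) (inv y') ≤ S.lam⁻¹ * dist y y' := by
      rw [inv_mul_eq_div, le_div_iff₀ hlam0, mul_comm]
      exact hexp1
    calc ρ₀ (inv y) ≤ ρ₀ (inv y') * Real.exp (K₂ * dist (inv y) (inv y')) :=
          hρb _ (haY hxm) _ (haY hxm')
      _ ≤ ρ₀ (inv y') * Real.exp ((S.lam⁻¹ * K₂) * dist y y') := by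
          refine mul_le_mul_of_nonneg_left (Real.exp_le_exp.2 ?_) (hρ0 _)
          calc K₂ * dist (inv y) (inv y') ≤ K₂ * (S.lam⁻¹ * dist y y') :=
                mul_le_mul_of_nonneg_left hd hK₂0
            _ = (S.lam⁻¹ * K₂) * dist y y' := by ring
  set φ : X → ℝ := (S.Y (k + l)).indicator (fun y => ρ₀ (inv y)) with hφ
  have hφm : Measurable φ :=
    measurable_indicator_of_continuousOn (S.Ymeas _) (continuousOn_of_LL hφb)
  have hφ0 : ∀ x, 0 ≤ φ x := fun x => Set.indicator_nonneg (fun y _ => hρ0 _) x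
  have key : Measure.map F (((S.m k).withDensity fun x => ENNReal.ofReal (ρ₀ x)).restrict a)
      = (S.m (k + l)).withDensity fun y => ENNReal.ofReal (ζ y * φ y) := by
    rw [restrict_withDensity (S.Pmeas k a haP)]
    have h1 : ((S.m k).restrict a).withDensity (fun x => ENNReal.ofReal (ρ₀ x))
        = ((S.m k).restrict a).withDensity (fun x => ENNReal.ofReal (φ (F x))) := by
      apply withDensity_congr_ae
      rw [Filter.EventuallyEq, ae_restrict_iff' (S.Pmeas k a haP)]
      refine Filter.Eventually.of_forall fun x hx => ?_
      have hFx : F x ∈ S.Y (k + l) := hbij.mapsTo hx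
      have h2 : φ (F x) = ρ₀ (inv (F x)) := Set.indicator_of_mem hFx _
      have h3 : inv (F x) = x := hbij.injOn.leftInvOn_invFunOn hx
      rw [h2, h3]
    rw [h1, map_withDensity_comp hFm hφm.ennreal_ofReal, hζeq,
      ← withDensity_mul _ hζm.ennreal_ofReal hφm.ennreal_ofReal]
    apply withDensity_congr_ae
    refine Filter.Eventually.of_forall fun y => ?_
    simp [ENNReal.ofReal_mul (hζ0 y)]
  refine ⟨fun y => ζ y * φ y, fun y => mul_nonneg (hζ0 y) (hφ0 y), hζm.mul hφm, key, ?_⟩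
  intro y hy y' hy'
  have hφy : φ y = ρ₀ (inv y) := Set.indicator_of_mem hy _
  have hφy' : φ y' = ρ₀ (inv y') := Set.indicator_of_mem hy' _
  show ζ y * φ y ≤ ζ y' * φ y' * Real.exp ((S.K + S.lam⁻¹ * K₂) * dist y y')
  rw [hφy, hφy']
  calc ζ y * ρ₀ (inv y)
      ≤ (ζ y' * Real.exp (S.K * dist y y')) *
        (ρ₀ (inv y') * Real.exp ((S.lam⁻¹ * K₂) * dist y y')) :=
        mul_le_mul (hζb y hy y' hy') (hφb y hy y' hy') (hρ0 _)
          (mul_nonneg (hζ0 _) (Real.exp_nonneg _))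
    _ = ζ y' * ρ₀ (inv y') * Real.exp ((S.K + S.lam⁻¹ * K₂) * dist y y') := by
        rw [add_mul, Real.exp_add]; ring

lemma NUE.regular_of_LL (S : NUE X) {K₂ K₁ : ℝ} (hK₂0 : 0 ≤ K₂)
    (hK₁ : K₁ = S.K + S.lam⁻¹ * K₂)
    {k : ℕ} (hk : 1 ≤ k) {μ : Measure X} (hμ : LLBoundedBy (S.m k) (S.Y k) μ K₂) :
    S.Regular K₁ k μ := by
  intro l hl
  haveI := S.mprob k
  haveI := S.mprob (k + l)
  have hk1 : 1 ≤ k + l := le_trans hk (Nat.le_add_right _ _)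
  have hfin : μ Set.univ ≠ ⊤ := LL_finite S.bounded (S.Ymeas k) (S.mY k hk) hK₂0 hμ
  obtain ⟨ρ₀, hρ0, hρm, hρeq, hρb⟩ := hμ
  have hμYc : μ (S.Y k)ᶜ = 0 := by
    rw [hρeq, withDensity_apply _ (S.Ymeas k).compl]
    exact setLIntegral_measure_zero _ _ (S.mYc_zero hk)
  obtain ⟨SS, hSSP, hSSY⟩ := S.PY k hk
  set A : Set (Set X) := {a ∈ SS | a ⊆ {x | S.tau k x = l}} with hA
  haveI : Countable ↥A := ((S.Pcount k).mono fun a ha => hSSP ha.1).to_subtype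
  have hstep : {x | S.tau k x = l} =ᵐ[μ] ⋃ i : ↥A, (i : Set X) := by
    have hsub1 : {x | S.tau k x = l} ∩ S.Y k ⊆ ⋃ i : ↥A, (i : Set X) := by
      rintro x ⟨hxτ, hxY⟩
      rw [hSSY] at hxY
      obtain ⟨b, hbSS, hxb⟩ := hxY
      have hbA : b ∈ A := by
        refine ⟨hbSS, fun x' hx' => ?_⟩
        have h4 : S.tau k x' = S.tau k x := S.nu2 k hk b (hSSP hbSS) x' hx' x hxb
        show S.tau k x' = l
        rw [h4]
        exact hxτ
      exact Set.mem_iUnion.2 ⟨⟨b, hbA⟩, hxb⟩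
    have hsub2 : (⋃ i : ↥A, (i : Set X)) ⊆ {x | S.tau k x = l} := by
      intro x hx
      obtain ⟨i, hxi⟩ := Set.mem_iUnion.1 hx
      exact i.2.2 hxi
    rw [Filter.eventuallyEq_set]
    have haeY : ∀ᵐ x ∂μ, x ∈ S.Y k := by
      rw [ae_iff]; exact hμYc
    filter_upwards [haeY] with x hxY
    exact ⟨fun h => hsub1 ⟨h, hxY⟩, fun h => hsub2 h⟩
  have hdecomp : μ.restrict {x | S.tau k x = l}
      = Measure.sum fun i : ↥A => μ.restrict (i : Set X) := by
    rw [Measure.restrict_congr_set hstep]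
    refine Measure.restrict_iUnion ?_ fun i => S.Pmeas k i (hSSP i.2.1)
    intro i j hij
    exact S.Pdisj k (hSSP i.2.1) (hSSP j.2.1) fun h => hij (Subtype.ext h)
  have hmap : Measure.map (seqComp S.T k l) (μ.restrict {x | S.tau k x = l})
      = Measure.sum fun i : ↥A => Measure.map (seqComp S.T k l) (μ.restrict (i : Set X)) := by
    rw [hdecomp]
    exact Measure.map_sum (seqComp_measurable S.Tmeas k l).aemeasurable
  rw [hmap]
  refine LLBoundedBy.sum_meas ?_ (S.mYc_zero hk1) ?_ ?_
  · intro i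
    have haY : (i : Set X) ⊆ S.Y k := by
      rw [hSSY]
      exact fun x hx => ⟨(i : Set X), i.2.1, hx⟩
    have hLL := S.piece_LL hK₂0 hk (hSSP i.2.1) haY (fun x hx => i.2.2 hx) hρ0 hρm hρb
    rw [hK₁, ← hρeq] at *
    exact hLL
  · rw [S.mY _ hk1]; exact one_ne_zero
  · rw [← hmap]
    have h1 : Measure.map (seqComp S.T k l) (μ.restrict {x | S.tau k x = l}) Set.univ
        = μ.restrict {x | S.tau k x = l} Set.univ := by
      rw [Measure.map_apply (seqComp_measurable S.Tmeas k l) MeasurableSet.univ,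
        Set.preimage_univ]
    rw [h1, Measure.restrict_apply_univ]
    exact ne_top_of_le_ne_top hfin (measure_mono (Set.subset_univ _))

end Helpers


theorem stmt4 {X : Type*} [MetricSpace X] [MeasurableSpace X] [BorelSpace X]
    (S : NUE X) (δ₀ : ℝ) (n₀ : ℕ) (hδ₀ : 0 < δ₀) (hn₀ : 1 ≤ n₀) (h5 : S.nu5 δ₀ n₀)
    (K₂ : ℝ) (hK₂ : (1 - S.lam⁻¹)⁻¹ * S.K < K₂)
    (K₁ : ℝ) (hK₁ : K₁ = S.K + S.lam⁻¹ * K₂) :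
    ∀ k, 1 ≤ k →
      (S.Regular K₁ k (S.m k) ∧ S.TailBound k (S.m k) (S.hTail k)) ∧
      ∀ μ : Measure X, LLBoundedBy (S.m k) (S.Y k) μ K₂ →
        S.Regular K₁ k μ ∧
        S.TailBound k μ
          (fun n => (μ (S.Y k)).toReal * Real.exp (Metric.diam (univ : Set X) * K₂) *
            S.hTail k n) := by
  have hlam0 : 0 < S.lam := lt_trans one_pos S.hlam
  have hlaminv1 : S.lam⁻¹ < 1 := inv_lt_one_of_one_lt₀ S.hlam
  have h1 : (0:ℝ) < 1 - S.lam⁻¹ := by linarith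
  have hK₂0 : 0 < K₂ := lt_of_le_of_lt (mul_pos (inv_pos.2 h1) S.hK).le hK₂
  intro k hk
  haveI := S.mprob k
  have hmLL : LLBoundedBy (S.m k) (S.Y k) (S.m k) K₂ := by
    refine ⟨fun _ => 1, fun _ => zero_le_one, measurable_const, ?_, ?_⟩
    · rw [show (fun _ : X => ENNReal.ofReal (1:ℝ)) = (1 : X → ℝ≥0∞) by
        funext x; simp, withDensity_one]
    · intro y hy y' hy'
      have h2 : (1:ℝ) ≤ Real.exp (K₂ * dist y y') :=
        Real.one_le_exp (mul_nonneg hK₂0.le dist_nonneg)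
      show (1:ℝ) ≤ 1 * Real.exp (K₂ * dist y y')
      linarith
  refine ⟨⟨S.regular_of_LL hK₂0.le hK₁ hk hmLL, fun n => ?_⟩,
    fun μ hμ => ⟨S.regular_of_LL hK₂0.le hK₁ hk hμ, fun n => ?_⟩⟩
  · rw [NUE.hTail, ENNReal.ofReal_toReal (measure_ne_top _ _)]
  · have hb := LL_measure_bound (μ := μ) S.bounded (S.Ymeas k) (S.mY k hk) hK₂0.le hμ
      _ (S.measurableSet_tau_ge hk n)
    refine le_trans hb (le_of_eq ?_)
    have hnn : 0 ≤ (μ (S.Y k)).toReal * Real.exp (Metric.diam (univ : Set X) * K₂) :=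
      mul_nonneg ENNReal.toReal_nonneg (Real.exp_nonneg _)
    simp only [NUE.hTail]
    rw [ENNReal.ofReal_mul hnn, ENNReal.ofReal_toReal (measure_ne_top _ _),
      mul_comm K₂ (Metric.diam (univ : Set X))]


end
end
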